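/- arXiv:1201.4981 — 9 statements merged into one kernel-verified Lean document; each statement's English description precedes it below -/
import Mathlib

section
/- Let ⟨M, ⋆, R, γ, η, ε⟩ be a right-monoidal category and define μ_M := (ε_R⋆M)∘γ_{R,R,M} : R⋆(R⋆M) → R⋆M. Then T = ⟨R⋆−, μ, η⟩ is a monad on M; that is, μ is natural and associative, μ_M∘(R⋆μ_M) = μ_M∘μ_{R⋆M}, and η is a two-sided unit, μ_N∘η_{R⋆N} = id_{R⋆N} and μ_N∘(R⋆η_N) = id_{R⋆N}. -/
open CategoryTheory

universe v u

/-- A right-monoidal (skew-monoidal) category structure on a category `C`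
with unit object `R`: a product `⋆`, a skew-associator `γ`, a unit `η` and
a counit `ε`, none of which is assumed invertible, subject to the pentagon
and the four (co)unit axioms. -/
structure RightMonoidalStruct (C : Type u) [Category.{v} C] (R : C) where
  smp : C → C → C
  smpHom : ∀ {X X' Y Y' : C}, (X ⟶ X') → (Y ⟶ Y') → (smp X Y ⟶ smp X' Y')
  smpHom_id : ∀ (X Y : C), smpHom (𝟙 X) (𝟙 Y) = 𝟙 (smp X Y)
  smpHom_comp : ∀ {X X' X'' Y Y' Y'' : C} (f : X ⟶ X') (f' : X' ⟶ X'')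
      (g : Y ⟶ Y') (g' : Y' ⟶ Y''),
      smpHom (f ≫ f') (g ≫ g') = smpHom f g ≫ smpHom f' g'
  γ : ∀ (L M N : C), smp L (smp M N) ⟶ smp (smp L M) N
  η : ∀ (M : C), M ⟶ smp R M
  ε : ∀ (M : C), smp M R ⟶ M
  γ_natural : ∀ {L L' M M' N N' : C} (f : L ⟶ L') (g : M ⟶ M') (h : N ⟶ N'),
      smpHom f (smpHom g h) ≫ γ L' M' N' = γ L M N ≫ smpHom (smpHom f g) h
  η_natural : ∀ {M M' : C} (f : M ⟶ M'), f ≫ η M' = η M ≫ smpHom (𝟙 R) f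
  ε_natural : ∀ {M M' : C} (f : M ⟶ M'), smpHom f (𝟙 R) ≫ ε M' = ε M ≫ f
  pentagon : ∀ (K L M N : C),
      smpHom (𝟙 K) (γ L M N) ≫ γ K (smp L M) N ≫ smpHom (γ K L M) (𝟙 N)
        = γ K L (smp M N) ≫ γ (smp K L) M N
  unit_triangle : ∀ (M N : C), η (smp M N) ≫ γ R M N = smpHom (η M) (𝟙 N)
  counit_triangle : ∀ (M N : C), γ M N R ≫ ε (smp M N) = smpHom (𝟙 M) (ε N)
  mixed_triangle : ∀ (M N : C),
      smpHom (𝟙 M) (η N) ≫ γ M R N ≫ smpHom (ε M) (𝟙 N) = 𝟙 (smp M N)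
  unit_counit : η R ≫ ε R = 𝟙 R

variable {C : Type u} [Category.{v} C] {R : C}

/-- The multiplication `μ_M := (ε_R ⋆ M) ∘ γ_{R,R,M}` of the canonical monad
`T = R ⋆ -`. -/
def RightMonoidalStruct.μ (S : RightMonoidalStruct C R) (M : C) :
    S.smp R (S.smp R M) ⟶ S.smp R M :=
  S.γ R R M ≫ S.smpHom (S.ε R) (𝟙 M)

/-
Associativity of `μ`: by naturality of `γ` and by the pentagon, both
`μ_M ∘ (R ⋆ μ_M)` and `μ_M ∘ μ_{R⋆M}` factor through
`γ_{R,R⋆R,M} ∘ (R ⋆ γ_{R,R,M})`, followed by `e ⋆ M` with `e = ε_R ∘ (R ⋆ ε_R)` and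
`e = ε_R ∘ μ_R` respectively. These two maps `R ⋆ (R ⋆ R) → R` agree by
naturality of `ε` and the counit triangle.
-/

namespace RightMonoidalStruct

variable (S : RightMonoidalStruct C R)

lemma id_smpHom_comp {X Y Y' Y'' : C} (g : Y ⟶ Y') (g' : Y' ⟶ Y'') :
    S.smpHom (𝟙 X) (g ≫ g') = S.smpHom (𝟙 X) g ≫ S.smpHom (𝟙 X) g' := by
  rw [← S.smpHom_comp, Category.id_comp]

lemma comp_smpHom_id {X X' X'' Y : C} (f : X ⟶ X') (f' : X' ⟶ X'') :
    S.smpHom (f ≫ f') (𝟙 Y) = S.smpHom f (𝟙 Y) ≫ S.smpHom f' (𝟙 Y) := by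
  rw [← S.smpHom_comp, Category.id_comp]

lemma μ_natural {M M' : C} (f : M ⟶ M') :
    S.smpHom (𝟙 R) (S.smpHom (𝟙 R) f) ≫ S.μ M' = S.μ M ≫ S.smpHom (𝟙 R) f := by
  rw [μ, μ, ← Category.assoc, S.γ_natural, Category.assoc, Category.assoc,
    ← S.smpHom_comp, ← S.smpHom_comp, S.smpHom_id]
  simp only [Category.id_comp, Category.comp_id]

lemma μ_comp_ε : S.μ R ≫ S.ε R = S.smpHom (𝟙 R) (S.ε R) ≫ S.ε R := by
  rw [μ, Category.assoc, S.ε_natural, ← Category.assoc, S.counit_triangle]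

lemma map_μ_comp_μ (M : C) :
    S.smpHom (𝟙 R) (S.μ M) ≫ S.μ M =
      S.smpHom (𝟙 R) (S.γ R R M) ≫ S.γ R (S.smp R R) M ≫
        S.smpHom (S.smpHom (𝟙 R) (S.ε R) ≫ S.ε R) (𝟙 M) := by
  rw [μ, id_smpHom_comp, Category.assoc, ← Category.assoc (S.smpHom _ (S.smpHom _ _)),
    S.γ_natural, comp_smpHom_id]
  simp only [Category.assoc]

lemma μ_comp_μ (M : C) :
    S.μ (S.smp R M) ≫ S.μ M =
      S.smpHom (𝟙 R) (S.γ R R M) ≫ S.γ R (S.smp R R) M ≫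
        S.smpHom (S.μ R ≫ S.ε R) (𝟙 M) := by
  calc S.μ (S.smp R M) ≫ S.μ M
      = (S.γ R R (S.smp R M) ≫ S.γ (S.smp R R) R M) ≫
          S.smpHom (S.smpHom (S.ε R) (𝟙 R)) (𝟙 M) ≫ S.smpHom (S.ε R) (𝟙 M) := by
        rw [μ, μ, ← S.smpHom_id R M, Category.assoc, ← Category.assoc (S.smpHom _ _),
          S.γ_natural]
        simp only [Category.assoc]
    _ = S.smpHom (𝟙 R) (S.γ R R M) ≫ S.γ R (S.smp R R) M ≫
          S.smpHom (S.μ R ≫ S.ε R) (𝟙 M) := by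
        rw [← S.pentagon, μ, comp_smpHom_id, comp_smpHom_id]
        simp only [Category.assoc]

lemma μ_assoc (M : C) :
    S.smpHom (𝟙 R) (S.μ M) ≫ S.μ M = S.μ (S.smp R M) ≫ S.μ M := by
  rw [map_μ_comp_μ, μ_comp_μ, μ_comp_ε]

lemma η_comp_μ (N : C) : S.η (S.smp R N) ≫ S.μ N = 𝟙 (S.smp R N) := by
  rw [μ, ← Category.assoc, S.unit_triangle, ← S.smpHom_comp, S.unit_counit,
    Category.comp_id, S.smpHom_id]

lemma map_η_comp_μ (N : C) : S.smpHom (𝟙 R) (S.η N) ≫ S.μ N = 𝟙 (S.smp R N) :=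
  S.mixed_triangle R N

end RightMonoidalStruct

/-- Lemma 2.5(i) of Szlachányi, "Skew-monoidal categories and
bialgebroids".  For a right-monoidal category `⟨M, ⋆, R, γ, η, ε⟩`, setting
`μ_M := (ε_R ⋆ M) ∘ γ_{R,R,M}`, the triple `T = ⟨R ⋆ -, μ, η⟩` is a monad:
`μ` is natural and associative, and `η` is a two-sided unit for it. -/
theorem canonical_monad (S : RightMonoidalStruct C R) :
    (∀ {M M' : C} (f : M ⟶ M'),
        S.smpHom (𝟙 R) (S.smpHom (𝟙 R) f) ≫ S.μ M' = S.μ M ≫ S.smpHom (𝟙 R) f) ∧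
    (∀ M : C, S.smpHom (𝟙 R) (S.μ M) ≫ S.μ M = S.μ (S.smp R M) ≫ S.μ M) ∧
    (∀ N : C, S.η (S.smp R N) ≫ S.μ N = 𝟙 (S.smp R N)) ∧
    (∀ N : C, S.smpHom (𝟙 R) (S.η N) ≫ S.μ N = 𝟙 (S.smp R N)) :=
  ⟨S.μ_natural, S.μ_assoc, S.η_comp_μ, S.map_η_comp_μ⟩
end

section
/- Let ⟨M, ⋆, R, γ, η, ε⟩ be a right-monoidal category and define δ_M := γ_{M,R,R}∘(M⋆η_R) : M⋆R → (M⋆R)⋆R. Then Q = ⟨−⋆R, δ, ε⟩ is a comonad on M; that is, δ is natural and coassociative, (δ_M⋆R)∘δ_M = δ_{M⋆R}∘δ_M, and ε is a two-sided counit, ε_{M⋆R}∘δ_M = id_{M⋆R} and (ε_M⋆R)∘δ_M = id_{M⋆R}. -/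
open CategoryTheory

universe v u

variable {C : Type u} [Category.{v} C] {R : C}

/-- The comultiplication `δ_M := γ_{M,R,R} ∘ (M ⋆ η_R)` of the canonical comonad `Q = - ⋆ R`. -/
def RightMonoidalStruct.δ (S : RightMonoidalStruct C R) (M : C) :
    S.smp M R ⟶ S.smp (S.smp M R) R :=
  S.smpHom (𝟙 M) (S.η R) ≫ S.γ M R R


/-- Lemma 2.5(ii) of Szlachányi, "Skew-monoidal categories and
bialgebroids".  For a right-monoidal category `⟨M, ⋆, R, γ, η, ε⟩`, setting
`δ_M := γ_{M,R,R} ∘ (M ⋆ η_R)`, the triple `Q = ⟨- ⋆ R, δ, ε⟩` is a comonad: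
`δ` is natural and coassociative, and `ε` is a two-sided counit for it. -/
theorem canonical_comonad (S : RightMonoidalStruct C R) :
    (∀ {M M' : C} (f : M ⟶ M'),
        S.smpHom f (𝟙 R) ≫ S.δ M' = S.δ M ≫ S.smpHom (S.smpHom f (𝟙 R)) (𝟙 R)) ∧
    (∀ M : C, S.δ M ≫ S.smpHom (S.δ M) (𝟙 R) = S.δ M ≫ S.δ (S.smp M R)) ∧
    (∀ M : C, S.δ M ≫ S.ε (S.smp M R) = 𝟙 (S.smp M R)) ∧
    (∀ M : C, S.δ M ≫ S.smpHom (S.ε M) (𝟙 R) = 𝟙 (S.smp M R)) := by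
  have hc : ∀ {X X' X'' : C} (f : X ⟶ X') (f' : X' ⟶ X''),
      S.smpHom (f ≫ f') (𝟙 R) = S.smpHom f (𝟙 R) ≫ S.smpHom f' (𝟙 R) := by
    intro X X' X'' f f'
    rw [← S.smpHom_comp]; simp
  have hc2 : ∀ {X : C} {Y Y' Y'' : C} (g : Y ⟶ Y') (g' : Y' ⟶ Y''),
      S.smpHom (𝟙 X) (g ≫ g') = S.smpHom (𝟙 X) g ≫ S.smpHom (𝟙 X) g' := by
    intro X Y Y' Y'' g g'
    rw [← S.smpHom_comp]; simp
  constructor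
  · intro M M' f
    simp only [RightMonoidalStruct.δ]
    rw [Category.assoc, ← S.γ_natural f (𝟙 R) (𝟙 R), ← Category.assoc,
      ← Category.assoc, ← S.smpHom_comp, ← S.smpHom_comp]
    simp [S.smpHom_id]
  constructor
  · intro M
    have h1 : S.η R ≫ S.smpHom (S.η R) (𝟙 R)
        = S.η R ≫ S.smpHom (𝟙 R) (S.η R) ≫ S.γ R R R := by
      rw [← S.unit_triangle R R, ← Category.assoc, S.η_natural (S.η R),
        Category.assoc]
    calc S.δ M ≫ S.smpHom (S.δ M) (𝟙 R)
        = S.smpHom (𝟙 M) (S.η R) ≫ S.γ M R R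
            ≫ S.smpHom (S.smpHom (𝟙 M) (S.η R)) (𝟙 R)
            ≫ S.smpHom (S.γ M R R) (𝟙 R) := by
          simp [RightMonoidalStruct.δ, hc]
      _ = S.smpHom (𝟙 M) (S.η R)
            ≫ S.smpHom (𝟙 M) (S.smpHom (S.η R) (𝟙 R))
            ≫ S.γ M (S.smp R R) R ≫ S.smpHom (S.γ M R R) (𝟙 R) := by
          rw [← Category.assoc (S.γ M R R), ← S.γ_natural (𝟙 M) (S.η R) (𝟙 R)]
          simp
      _ = S.smpHom (𝟙 M) (S.η R ≫ S.smpHom (S.η R) (𝟙 R))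
            ≫ S.γ M (S.smp R R) R ≫ S.smpHom (S.γ M R R) (𝟙 R) := by
          rw [hc2]; simp
      _ = S.smpHom (𝟙 M) (S.η R)
            ≫ S.smpHom (𝟙 M) (S.smpHom (𝟙 R) (S.η R))
            ≫ S.smpHom (𝟙 M) (S.γ R R R)
            ≫ S.γ M (S.smp R R) R ≫ S.smpHom (S.γ M R R) (𝟙 R) := by
          rw [h1]
          simp only [hc2, Category.assoc]
      _ = S.smpHom (𝟙 M) (S.η R)
            ≫ S.smpHom (𝟙 M) (S.smpHom (𝟙 R) (S.η R))
            ≫ S.γ M R (S.smp R R) ≫ S.γ (S.smp M R) R R := by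
          rw [S.pentagon M R R R]
      _ = S.δ M ≫ S.δ (S.smp M R) := by
          simp only [RightMonoidalStruct.δ]
          rw [show S.smpHom (𝟙 (S.smp M R)) (S.η R)
                = S.smpHom (S.smpHom (𝟙 M) (𝟙 R)) (S.η R) by rw [S.smpHom_id],
            Category.assoc, ← Category.assoc (S.γ M R R), ← S.γ_natural (𝟙 M) (𝟙 R) (S.η R)]
          simp
  constructor
  · intro M
    simp only [RightMonoidalStruct.δ, Category.assoc, S.counit_triangle M R,
      ← S.smpHom_comp, Category.comp_id, S.unit_counit, S.smpHom_id]
  · intro M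
    simpa [RightMonoidalStruct.δ] using S.mixed_triangle M R
end

section
/- Let ⟨M, ⋆, R, γ, η, ε⟩ be a right-monoidal category with canonical monad T = ⟨R⋆−, μ, η⟩ and canonical comonad Q = ⟨−⋆R, δ, ε⟩. Then χ_M := γ_{R,M,R} : TQM → QTM is a mixed distributive law χ : TQ → QT; explicitly, for all objects M: (μ_M⋆R)∘χ_{R⋆M}∘(R⋆χ_M) = χ_M∘μ_{M⋆R}; (χ_M⋆R)∘χ_{M⋆R}∘(R⋆δ_M) = δ_{R⋆M}∘χ_M; χ_M∘η_{M⋆R} = η_M⋆R; ε_{R⋆M}∘χ_M = R⋆ε_M. -/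
open CategoryTheory

universe v u

variable {C : Type u} [Category.{v} C] {R : C}

/-- The mixed distributive law `χ_M := γ_{R,M,R} : T(QM) ⟶ Q(TM)` relating the
canonical monad `T = R ⋆ -` and the canonical comonad `Q = - ⋆ R`. -/
def RightMonoidalStruct.χ (S : RightMonoidalStruct C R) (M : C) :
    S.smp R (S.smp M R) ⟶ S.smp (S.smp R M) R :=
  S.γ R M R

lemma whisker_left_comp (S : RightMonoidalStruct C R) {X Y Y' Y'' : C}
    (f : Y ⟶ Y') (g : Y' ⟶ Y'') :
    S.smpHom (𝟙 X) (f ≫ g) = S.smpHom (𝟙 X) f ≫ S.smpHom (𝟙 X) g := by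
  rw [← S.smpHom_comp, Category.comp_id]

lemma whisker_right_comp (S : RightMonoidalStruct C R) {X X' X'' Y : C}
    (f : X ⟶ X') (g : X' ⟶ X'') :
    S.smpHom (f ≫ g) (𝟙 Y) = S.smpHom f (𝟙 Y) ≫ S.smpHom g (𝟙 Y) := by
  rw [← S.smpHom_comp, Category.comp_id]

/-- Lemma 2.5(iii) of Szlachányi.  In a right-monoidal category,
`χ_M := γ_{R,M,R}` is a mixed distributive law `χ : TQ → QT` between the
canonical monad `T = ⟨R ⋆ -, μ, η⟩` and the canonical comonad `Q = ⟨- ⋆ R, δ, ε⟩`: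
`(μ_M ⋆ R) ∘ χ_{R⋆M} ∘ (R ⋆ χ_M) = χ_M ∘ μ_{M⋆R}`,
`(χ_M ⋆ R) ∘ χ_{M⋆R} ∘ (R ⋆ δ_M) = δ_{R⋆M} ∘ χ_M`,
`χ_M ∘ η_{M⋆R} = η_M ⋆ R`, and `ε_{R⋆M} ∘ χ_M = R ⋆ ε_M`. -/
theorem canonical_distributive_law (S : RightMonoidalStruct C R) :
    (∀ M : C,
        S.smpHom (𝟙 R) (S.χ M) ≫ S.χ (S.smp R M) ≫ S.smpHom (S.μ M) (𝟙 R)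
          = S.μ (S.smp M R) ≫ S.χ M) ∧
    (∀ M : C,
        S.smpHom (𝟙 R) (S.δ M) ≫ S.χ (S.smp M R) ≫ S.smpHom (S.χ M) (𝟙 R)
          = S.χ M ≫ S.δ (S.smp R M)) ∧
    (∀ M : C, S.η (S.smp M R) ≫ S.χ M = S.smpHom (S.η M) (𝟙 R)) ∧
    (∀ M : C, S.χ M ≫ S.ε (S.smp R M) = S.smpHom (𝟙 R) (S.ε M)) := by
  refine ⟨fun M => ?_, fun M => ?_, fun M => S.unit_triangle M R,
    fun M => S.counit_triangle R M⟩
  · calc S.smpHom (𝟙 R) (S.χ M) ≫ S.χ (S.smp R M) ≫ S.smpHom (S.μ M) (𝟙 R)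
        = S.smpHom (𝟙 R) (S.γ R M R) ≫ S.γ R (S.smp R M) R ≫
            S.smpHom (S.γ R R M) (𝟙 R) ≫ S.smpHom (S.smpHom (S.ε R) (𝟙 M)) (𝟙 R) := by
          simp only [RightMonoidalStruct.χ, RightMonoidalStruct.μ,
            whisker_right_comp, Category.assoc]
      _ = S.γ R R (S.smp M R) ≫ S.γ (S.smp R R) M R ≫
            S.smpHom (S.smpHom (S.ε R) (𝟙 M)) (𝟙 R) := by
          slice_lhs 1 3 => rw [S.pentagon]
          simp only [Category.assoc]
      _ = S.γ R R (S.smp M R) ≫ S.smpHom (S.ε R) (S.smpHom (𝟙 M) (𝟙 R)) ≫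
            S.γ R M R := by rw [S.γ_natural (S.ε R) (𝟙 M) (𝟙 R)]
      _ = S.μ (S.smp M R) ≫ S.χ M := by
          simp [RightMonoidalStruct.χ, RightMonoidalStruct.μ, S.smpHom_id]
  · calc S.smpHom (𝟙 R) (S.δ M) ≫ S.χ (S.smp M R) ≫ S.smpHom (S.χ M) (𝟙 R)
        = S.smpHom (𝟙 R) (S.smpHom (𝟙 M) (S.η R)) ≫ S.smpHom (𝟙 R) (S.γ M R R) ≫
            S.γ R (S.smp M R) R ≫ S.smpHom (S.γ R M R) (𝟙 R) := by
          simp only [RightMonoidalStruct.χ, RightMonoidalStruct.δ,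
            whisker_left_comp, Category.assoc]
      _ = S.smpHom (𝟙 R) (S.smpHom (𝟙 M) (S.η R)) ≫ S.γ R M (S.smp R R) ≫
            S.γ (S.smp R M) R R := by
          slice_lhs 2 4 => rw [S.pentagon]
      _ = S.γ R M R ≫ S.smpHom (S.smpHom (𝟙 R) (𝟙 M)) (S.η R) ≫
            S.γ (S.smp R M) R R := by
          slice_lhs 1 2 => rw [S.γ_natural (𝟙 R) (𝟙 M) (S.η R)]
          simp only [Category.assoc]
      _ = S.χ M ≫ S.δ (S.smp R M) := by
          simp [RightMonoidalStruct.χ, RightMonoidalStruct.δ, S.smpHom_id]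
end

section
/- Let M and N be right-monoidal categories with canonical monads T = ⟨R⋆−, μ, η⟩ and canonical comonads Q = ⟨−⋆R, δ, ε⟩. (a) If ⟨F, F₂, F₀⟩ is a right-monoidal functor M → N, then φ_M := F_{R,M}∘(F₀⋆FM) : R⋆FM → F(R⋆M) satisfies Fμ_M∘φ_{R⋆M}∘(R⋆φ_M) = φ_M∘μ_{FM} and Fη_M = φ_M∘η_{FM}; i.e., ⟨F, φ⟩ is a monad morphism from the canonical monad of M to the canonical monad of N. (b) Dually, if ⟨F, F², F⁰⟩ is a right-opmonoidal functor M → N, then ψ_M := (FM⋆F⁰)∘F^{M,R} : F(M⋆R) → FM⋆R satisfies F δ_M followed by ψ_{M⋆R} followed by ψ_M⋆R equals δ_{FM}∘ψ_M, and ε_{FM}∘ψ_M = Fε_M; i.e., ⟨F, ψ⟩ is a comonad morphism from the canonical comonad of M to the canonical comonad of N. -/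
open CategoryTheory

universe v u

variable {C : Type u} [Category.{v} C] {R : C}

variable {D : Type u} [Category.{v} D] {R' : D}

/-- A right-monoidal functor `⟨F, F₂, F₀⟩` between right-monoidal categories. -/
structure RightMonoidalFunctor (S : RightMonoidalStruct C R)
    (T : RightMonoidalStruct D R') where
  obj : C → D
  map : ∀ {X Y : C}, (X ⟶ Y) → (obj X ⟶ obj Y)
  map_id : ∀ X : C, map (𝟙 X) = 𝟙 (obj X)
  map_comp : ∀ {X Y Z : C} (f : X ⟶ Y) (g : Y ⟶ Z), map (f ≫ g) = map f ≫ map g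
  F₀ : R' ⟶ obj R
  F₂ : ∀ (X Y : C), T.smp (obj X) (obj Y) ⟶ obj (S.smp X Y)
  F₂_natural : ∀ {X X' Y Y' : C} (f : X ⟶ X') (g : Y ⟶ Y'),
      T.smpHom (map f) (map g) ≫ F₂ X' Y' = F₂ X Y ≫ map (S.smpHom f g)
  assoc : ∀ X Y Z : C,
      T.smpHom (𝟙 (obj X)) (F₂ Y Z) ≫ F₂ X (S.smp Y Z) ≫ map (S.γ X Y Z)
        = T.γ (obj X) (obj Y) (obj Z) ≫ T.smpHom (F₂ X Y) (𝟙 (obj Z)) ≫ F₂ (S.smp X Y) Z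
  unit : ∀ X : C,
      T.η (obj X) ≫ T.smpHom F₀ (𝟙 (obj X)) ≫ F₂ R X = map (S.η X)
  counit : ∀ X : C,
      T.smpHom (𝟙 (obj X)) F₀ ≫ F₂ X R ≫ map (S.ε X) = T.ε (obj X)

/-- A right-opmonoidal functor `⟨F, Fo2, Fo0⟩` between right-monoidal categories,
i.e. a right-monoidal functor between the opposite-reversed categories. -/
structure RightOpmonoidalFunctor (S : RightMonoidalStruct C R)
    (T : RightMonoidalStruct D R') where
  obj : C → D
  map : ∀ {X Y : C}, (X ⟶ Y) → (obj X ⟶ obj Y)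
  map_id : ∀ X : C, map (𝟙 X) = 𝟙 (obj X)
  map_comp : ∀ {X Y Z : C} (f : X ⟶ Y) (g : Y ⟶ Z), map (f ≫ g) = map f ≫ map g
  Fo0 : obj R ⟶ R'
  Fo2 : ∀ (X Y : C), obj (S.smp X Y) ⟶ T.smp (obj X) (obj Y)
  Fo2_natural : ∀ {X X' Y Y' : C} (f : X ⟶ X') (g : Y ⟶ Y'),
      map (S.smpHom f g) ≫ Fo2 X' Y' = Fo2 X Y ≫ T.smpHom (map f) (map g)
  assoc : ∀ X Y Z : C,
      Fo2 X (S.smp Y Z) ≫ T.smpHom (𝟙 (obj X)) (Fo2 Y Z) ≫ T.γ (obj X) (obj Y) (obj Z)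
        = map (S.γ X Y Z) ≫ Fo2 (S.smp X Y) Z ≫ T.smpHom (Fo2 X Y) (𝟙 (obj Z))
  unit : ∀ X : C,
      Fo2 X R ≫ T.smpHom (𝟙 (obj X)) Fo0 ≫ T.ε (obj X) = map (S.ε X)
  counit : ∀ X : C,
      map (S.η X) ≫ Fo2 R X ≫ T.smpHom Fo0 (𝟙 (obj X)) = T.η (obj X)


namespace RightMonoidalStruct

variable {C' : Type u} [Category.{v} C'] {R₀ : C'} (S : RightMonoidalStruct C' R₀)

lemma whiskL {X Y Y' Y'' : C'} (f : Y ⟶ Y') (g : Y' ⟶ Y'') :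
    S.smpHom (𝟙 X) (f ≫ g) = S.smpHom (𝟙 X) f ≫ S.smpHom (𝟙 X) g := by
  rw [← S.smpHom_comp, Category.id_comp]

lemma whiskR {X X' X'' Y : C'} (f : X ⟶ X') (g : X' ⟶ X'') :
    S.smpHom (f ≫ g) (𝟙 Y) = S.smpHom f (𝟙 Y) ≫ S.smpHom g (𝟙 Y) := by
  rw [← S.smpHom_comp, Category.id_comp]

lemma exch {X X' Y Y' : C'} (f : X ⟶ X') (g : Y ⟶ Y') :
    S.smpHom f (𝟙 Y) ≫ S.smpHom (𝟙 X') g = S.smpHom (𝟙 X) g ≫ S.smpHom f (𝟙 Y') := by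
  rw [← S.smpHom_comp, ← S.smpHom_comp, Category.id_comp, Category.id_comp,
    Category.comp_id, Category.comp_id]

end RightMonoidalStruct

/-- Lemma 2.7 of Szlachányi.  (a) A right-monoidal functor
`⟨F, F₂, F₀⟩` induces, via `φ_M := F_{R,M} ∘ (F₀ ⋆ FM)`, a monad morphism from
the canonical monad of the source to the canonical monad of the target.
(b) Dually, a right-opmonoidal functor `⟨G, G², G⁰⟩` induces, via
`ψ_M := (GM ⋆ G⁰) ∘ G^{M,R}`, a comonad morphism between the canonical
comonads. -/
theorem canonical_monad_morphism (S : RightMonoidalStruct C R)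
    (T : RightMonoidalStruct D R')
    (F : RightMonoidalFunctor S T) (G : RightOpmonoidalFunctor S T) :
    (∀ M : C,
        T.smpHom (𝟙 R') (T.smpHom F.F₀ (𝟙 (F.obj M)) ≫ F.F₂ R M)
            ≫ (T.smpHom F.F₀ (𝟙 (F.obj (S.smp R M))) ≫ F.F₂ R (S.smp R M))
            ≫ F.map (S.μ M)
          = T.μ (F.obj M) ≫ (T.smpHom F.F₀ (𝟙 (F.obj M)) ≫ F.F₂ R M)) ∧
    (∀ M : C,
        F.map (S.η M) = T.η (F.obj M) ≫ (T.smpHom F.F₀ (𝟙 (F.obj M)) ≫ F.F₂ R M)) ∧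
    (∀ M : C,
        G.map (S.δ M)
            ≫ (G.Fo2 (S.smp M R) R ≫ T.smpHom (𝟙 (G.obj (S.smp M R))) G.Fo0)
            ≫ T.smpHom (G.Fo2 M R ≫ T.smpHom (𝟙 (G.obj M)) G.Fo0) (𝟙 R')
          = (G.Fo2 M R ≫ T.smpHom (𝟙 (G.obj M)) G.Fo0) ≫ T.δ (G.obj M)) ∧
    (∀ M : C,
        (G.Fo2 M R ≫ T.smpHom (𝟙 (G.obj M)) G.Fo0) ≫ T.ε (G.obj M) = G.map (S.ε M)) := by
  refine ⟨?_, ?_, ?_, ?_⟩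
  · intro M
    simp only [RightMonoidalStruct.μ, F.map_comp, T.whiskL, Category.assoc]
    rw [reassoc_of% (T.exch F.F₀ (F.F₂ R M)).symm,
      reassoc_of% F.assoc R R M,
      ← F.F₂_natural (S.ε R) (𝟙 M), F.map_id]
    have hc : T.smpHom (𝟙 R') (T.smpHom F.F₀ (𝟙 (F.obj M)))
        ≫ T.smpHom F.F₀ (𝟙 (T.smp (F.obj R) (F.obj M)))
        = T.smpHom F.F₀ (T.smpHom F.F₀ (𝟙 (F.obj M))) := by
      rw [← T.smpHom_comp, Category.id_comp, Category.comp_id]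
    rw [reassoc_of% hc, reassoc_of% T.γ_natural F.F₀ F.F₀ (𝟙 (F.obj M))]
    have hinner : T.smpHom F.F₀ F.F₀ ≫ F.F₂ R R ≫ F.map (S.ε R) = T.ε R' ≫ F.F₀ := by
      have hsp : T.smpHom F.F₀ F.F₀
          = T.smpHom F.F₀ (𝟙 R') ≫ T.smpHom (𝟙 (F.obj R)) F.F₀ := by
        rw [← T.smpHom_comp, Category.id_comp, Category.comp_id]
      rw [hsp, Category.assoc, F.counit R, T.ε_natural F.F₀]
    rw [reassoc_of% (T.whiskR (F.F₂ R R) (F.map (S.ε R))).symm,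
      reassoc_of% (T.whiskR (T.smpHom F.F₀ F.F₀) (F.F₂ R R ≫ F.map (S.ε R))).symm,
      hinner, reassoc_of% T.whiskR (T.ε R') F.F₀]
  · intro M
    exact (F.unit M).symm
  · intro M
    simp only [RightMonoidalStruct.δ, G.map_comp, T.whiskR, Category.assoc]
    rw [reassoc_of% (T.exch (G.Fo2 M R) G.Fo0).symm,
      (T.exch (T.smpHom (𝟙 (G.obj M)) G.Fo0) G.Fo0).symm,
      reassoc_of% (G.assoc M R R).symm,
      reassoc_of% G.Fo2_natural (𝟙 M) (S.η R), G.map_id]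
    have hc : T.smpHom (T.smpHom (𝟙 (G.obj M)) G.Fo0) (𝟙 (G.obj R))
        ≫ T.smpHom (𝟙 (T.smp (G.obj M) R')) G.Fo0
        = T.smpHom (T.smpHom (𝟙 (G.obj M)) G.Fo0) G.Fo0 := by
      rw [← T.smpHom_comp, Category.id_comp, Category.comp_id]
    rw [hc, (T.γ_natural (𝟙 (G.obj M)) G.Fo0 G.Fo0).symm]
    have hinner : G.map (S.η R) ≫ G.Fo2 R R ≫ T.smpHom G.Fo0 G.Fo0
        = G.Fo0 ≫ T.η R' := by
      have hsp : T.smpHom G.Fo0 G.Fo0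
          = T.smpHom G.Fo0 (𝟙 (G.obj R)) ≫ T.smpHom (𝟙 R') G.Fo0 := by
        rw [← T.smpHom_comp, Category.id_comp, Category.comp_id]
      rw [hsp, reassoc_of% G.counit R, ← T.η_natural G.Fo0]
    rw [reassoc_of% (T.whiskL (G.Fo2 R R) (T.smpHom G.Fo0 G.Fo0)).symm,
      reassoc_of% (T.whiskL (G.map (S.η R)) (G.Fo2 R R ≫ T.smpHom G.Fo0 G.Fo0)).symm,
      hinner, reassoc_of% T.whiskL G.Fo0 (T.η R')]
  · intro M
    simp only [Category.assoc]
    exact G.unit M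
end

section
/- Let ⟨M, ⋆, R, γ, η, ε⟩ be a right-monoidal category and E = End(R). For any objects K, L of M, the map ρ : E → M(K⋆L, K⋆L) defined by ρ(r) := (ε_K⋆L)∘γ_{K,R,L}∘(K⋆(r⋆L))∘(K⋆η_L) satisfies ρ(id_R) = id_{K⋆L} and ρ(r₁)∘ρ(r₂) = ρ(r₂∘r₁) for all r₁, r₂ ∈ E; i.e., ρ is a right action of the monoid E on K⋆L. Moreover ρ(r) is natural in K and L, so it commutes with f⋆g for all arrows f : K → K', g : L → L'; in particular, when K and L are left E-objects, ρ(r) commutes with λ_K(r')⋆L and with K⋆λ_L(r') for all r' ∈ E. -/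
open CategoryTheory

universe v u

variable {C : Type u} [Category.{v} C] {R : C}

/-- The canonical right `E`-action (`E = End R`) on a right-monoidal product
`K ⋆ L`:  `ρ(r) := (ε_K ⋆ L) ∘ γ_{K,R,L} ∘ (K ⋆ (r ⋆ L)) ∘ (K ⋆ η_L)`. -/
def rhoAct (S : RightMonoidalStruct C R) (K L : C) (r : R ⟶ R) :
    S.smp K L ⟶ S.smp K L :=
  S.smpHom (𝟙 K) (S.η L) ≫ S.smpHom (𝟙 K) (S.smpHom r (𝟙 L)) ≫
    S.γ K R L ≫ S.smpHom (S.ε K) (𝟙 L)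

section Aux

variable (S : RightMonoidalStruct C R)

lemma smp_fuse {X X' X'' Y Y' Y'' : C} (f : X ⟶ X') (f' : X' ⟶ X'')
    (g : Y ⟶ Y') (g' : Y' ⟶ Y'') :
    S.smpHom f g ≫ S.smpHom f' g' = S.smpHom (f ≫ f') (g ≫ g') :=
  (S.smpHom_comp f f' g g').symm

lemma smp_swap {X X' Y Y' : C} (f : X ⟶ X') (g : Y ⟶ Y') :
    S.smpHom f (𝟙 Y) ≫ S.smpHom (𝟙 X') g = S.smpHom (𝟙 X) g ≫ S.smpHom f (𝟙 Y') := by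
  rw [smp_fuse, smp_fuse]
  simp only [Category.id_comp, Category.comp_id]

lemma rho_eq (K L : C) (r : R ⟶ R) : rhoAct S K L r =
    S.smpHom (𝟙 K) (S.η L ≫ S.smpHom r (𝟙 L)) ≫ S.γ K R L ≫ S.smpHom (S.ε K) (𝟙 L) := by
  rw [rhoAct, ← Category.assoc, smp_fuse, Category.comp_id]

lemma rho_unit (K L : C) : rhoAct S K L (𝟙 R) = 𝟙 (S.smp K L) := by
  rw [rhoAct, S.smpHom_id, S.smpHom_id, Category.id_comp, S.mixed_triangle]

lemma rho_nat {K K' L L' : C} (f : K ⟶ K') (g : L ⟶ L') (r : R ⟶ R) :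
    S.smpHom f g ≫ rhoAct S K' L' r = rhoAct S K L r ≫ S.smpHom f g := by
  rw [rho_eq, rho_eq]
  have h1 : g ≫ S.η L' ≫ S.smpHom r (𝟙 L')
      = (S.η L ≫ S.smpHom r (𝟙 L)) ≫ S.smpHom (𝟙 R) g := by
    rw [← Category.assoc, S.η_natural g, Category.assoc, Category.assoc, smp_swap]
  calc S.smpHom f g ≫ S.smpHom (𝟙 K') (S.η L' ≫ S.smpHom r (𝟙 L')) ≫
        S.γ K' R L' ≫ S.smpHom (S.ε K') (𝟙 L')
      = S.smpHom f ((S.η L ≫ S.smpHom r (𝟙 L)) ≫ S.smpHom (𝟙 R) g) ≫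
          S.γ K' R L' ≫ S.smpHom (S.ε K') (𝟙 L') := by
        rw [← Category.assoc, smp_fuse, Category.comp_id, h1]
    _ = S.smpHom (𝟙 K) (S.η L ≫ S.smpHom r (𝟙 L)) ≫ S.smpHom f (S.smpHom (𝟙 R) g) ≫
          S.γ K' R L' ≫ S.smpHom (S.ε K') (𝟙 L') := by
        rw [show S.smpHom f ((S.η L ≫ S.smpHom r (𝟙 L)) ≫ S.smpHom (𝟙 R) g)
            = S.smpHom (𝟙 K) (S.η L ≫ S.smpHom r (𝟙 L)) ≫ S.smpHom f (S.smpHom (𝟙 R) g)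
          from by rw [smp_fuse, Category.id_comp], Category.assoc]
    _ = S.smpHom (𝟙 K) (S.η L ≫ S.smpHom r (𝟙 L)) ≫ S.γ K R L ≫
          S.smpHom (S.smpHom f (𝟙 R)) g ≫ S.smpHom (S.ε K') (𝟙 L') := by
        slice_lhs 2 3 => rw [S.γ_natural f (𝟙 R) g]
        simp only [Category.assoc]
    _ = S.smpHom (𝟙 K) (S.η L ≫ S.smpHom r (𝟙 L)) ≫ S.γ K R L ≫
          S.smpHom (S.ε K) (𝟙 L) ≫ S.smpHom f g := by
        rw [smp_fuse, S.ε_natural f, Category.comp_id,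
          show S.smpHom (S.ε K ≫ f) g = S.smpHom (S.ε K) (𝟙 L) ≫ S.smpHom f g
          from by rw [smp_fuse, Category.id_comp]]
    _ = (S.smpHom (𝟙 K) (S.η L ≫ S.smpHom r (𝟙 L)) ≫ S.γ K R L ≫
          S.smpHom (S.ε K) (𝟙 L)) ≫ S.smpHom f g := by
        simp only [Category.assoc]

/-- Composition law for `θ_M := γ_{K,R,M} ≫ (ε_K ⋆ M)`. -/
lemma theta_comp (K L : C) :
    S.γ K R (S.smp R L) ≫ S.smpHom (S.ε K) (𝟙 (S.smp R L))
        ≫ S.γ K R L ≫ S.smpHom (S.ε K) (𝟙 L)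
      = S.smpHom (𝟙 K) (S.μ L) ≫ S.γ K R L ≫ S.smpHom (S.ε K) (𝟙 L) := by
  have h1 : S.smpHom (S.ε K) (𝟙 (S.smp R L)) ≫ S.γ K R L
      = S.γ (S.smp K R) R L ≫ S.smpHom (S.smpHom (S.ε K) (𝟙 R)) (𝟙 L) := by
    have := S.γ_natural (S.ε K) (𝟙 R) (𝟙 L)
    rwa [S.smpHom_id] at this
  calc S.γ K R (S.smp R L) ≫ S.smpHom (S.ε K) (𝟙 (S.smp R L))
        ≫ S.γ K R L ≫ S.smpHom (S.ε K) (𝟙 L)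
      = (S.γ K R (S.smp R L) ≫ S.γ (S.smp K R) R L) ≫
          S.smpHom (S.smpHom (S.ε K) (𝟙 R)) (𝟙 L) ≫ S.smpHom (S.ε K) (𝟙 L) := by
        slice_lhs 2 3 => rw [h1]
        simp only [Category.assoc]
    _ = (S.smpHom (𝟙 K) (S.γ R R L) ≫ S.γ K (S.smp R R) L ≫
          S.smpHom (S.γ K R R) (𝟙 L)) ≫
          S.smpHom (S.ε (S.smp K R)) (𝟙 L) ≫ S.smpHom (S.ε K) (𝟙 L) := by
        rw [S.pentagon K R R L, smp_fuse, S.ε_natural (S.ε K), ← smp_fuse]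
    _ = S.smpHom (𝟙 K) (S.γ R R L) ≫ S.γ K (S.smp R R) L ≫
          S.smpHom (S.smpHom (𝟙 K) (S.ε R)) (𝟙 L) ≫ S.smpHom (S.ε K) (𝟙 L) := by
        slice_lhs 3 4 => rw [smp_fuse, S.counit_triangle]
        simp only [Category.assoc, Category.comp_id]
    _ = S.smpHom (𝟙 K) (S.γ R R L) ≫ S.smpHom (𝟙 K) (S.smpHom (S.ε R) (𝟙 L)) ≫
          S.γ K R L ≫ S.smpHom (S.ε K) (𝟙 L) := by
        slice_lhs 2 3 => rw [← S.γ_natural (𝟙 K) (S.ε R) (𝟙 L)]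
        simp only [Category.assoc]
    _ = S.smpHom (𝟙 K) (S.μ L) ≫ S.γ K R L ≫ S.smpHom (S.ε K) (𝟙 L) := by
        rw [← Category.assoc, smp_fuse, Category.comp_id]
        rfl

lemma u_comp (L : C) (r₁ r₂ : R ⟶ R) :
    (S.η L ≫ S.smpHom r₂ (𝟙 L)) ≫ S.smpHom (𝟙 R) (S.η L ≫ S.smpHom r₁ (𝟙 L)) ≫ S.μ L
      = S.η L ≫ S.smpHom (r₁ ≫ r₂) (𝟙 L) := by
  set u₁ := S.η L ≫ S.smpHom r₁ (𝟙 L) with hu₁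
  have h3 : S.smpHom r₂ (𝟙 (S.smp R L)) ≫ S.γ R R L
      = S.γ R R L ≫ S.smpHom (S.smpHom r₂ (𝟙 R)) (𝟙 L) := by
    have := S.γ_natural r₂ (𝟙 R) (𝟙 L)
    rwa [S.smpHom_id] at this
  calc (S.η L ≫ S.smpHom r₂ (𝟙 L)) ≫ S.smpHom (𝟙 R) u₁ ≫ S.μ L
      = S.η L ≫ (S.smpHom r₂ (𝟙 L) ≫ S.smpHom (𝟙 R) u₁) ≫
          S.γ R R L ≫ S.smpHom (S.ε R) (𝟙 L) := by
        rw [RightMonoidalStruct.μ]; simp only [Category.assoc]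
    _ = (S.η L ≫ S.smpHom (𝟙 R) u₁) ≫ S.smpHom r₂ (𝟙 (S.smp R L)) ≫
          S.γ R R L ≫ S.smpHom (S.ε R) (𝟙 L) := by
        rw [smp_swap]; simp only [Category.assoc]
    _ = u₁ ≫ S.η (S.smp R L) ≫ S.γ R R L ≫
          S.smpHom (S.smpHom r₂ (𝟙 R)) (𝟙 L) ≫ S.smpHom (S.ε R) (𝟙 L) := by
        rw [← S.η_natural u₁]
        slice_lhs 4 5 => rw [h3]
        simp only [hu₁, Category.assoc]
    _ = u₁ ≫ S.smpHom (S.η R) (𝟙 L) ≫ S.smpHom (S.smpHom r₂ (𝟙 R) ≫ S.ε R) (𝟙 L) := by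
        rw [← Category.assoc (S.η (S.smp R L)), S.unit_triangle, smp_fuse, Category.comp_id]
    _ = u₁ ≫ S.smpHom (S.η R ≫ S.ε R ≫ r₂) (𝟙 L) := by
        rw [S.ε_natural r₂, smp_fuse, Category.comp_id, Category.assoc]
    _ = S.η L ≫ S.smpHom (r₁ ≫ r₂) (𝟙 L) := by
        rw [← Category.assoc (S.η R), S.unit_counit, Category.id_comp, hu₁,
          Category.assoc, smp_fuse, Category.comp_id]

lemma rho_mul (K L : C) (r₁ r₂ : R ⟶ R) :
    rhoAct S K L r₂ ≫ rhoAct S K L r₁ = rhoAct S K L (r₁ ≫ r₂) := by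
  rw [rho_eq, rho_eq, rho_eq]
  set u₁ := S.η L ≫ S.smpHom r₁ (𝟙 L) with hu₁
  set u₂ := S.η L ≫ S.smpHom r₂ (𝟙 L) with hu₂
  have h2 : S.γ K R L ≫ S.smpHom (𝟙 (S.smp K R)) u₁
      = S.smpHom (𝟙 K) (S.smpHom (𝟙 R) u₁) ≫ S.γ K R (S.smp R L) := by
    have := S.γ_natural (𝟙 K) (𝟙 R) u₁
    rw [S.smpHom_id] at this
    exact this.symm
  calc (S.smpHom (𝟙 K) u₂ ≫ S.γ K R L ≫ S.smpHom (S.ε K) (𝟙 L)) ≫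
        S.smpHom (𝟙 K) u₁ ≫ S.γ K R L ≫ S.smpHom (S.ε K) (𝟙 L)
      = S.smpHom (𝟙 K) u₂ ≫ S.γ K R L ≫
          (S.smpHom (S.ε K) (𝟙 L) ≫ S.smpHom (𝟙 K) u₁) ≫
          S.γ K R L ≫ S.smpHom (S.ε K) (𝟙 L) := by
        simp only [Category.assoc]
    _ = S.smpHom (𝟙 K) u₂ ≫ (S.γ K R L ≫ S.smpHom (𝟙 (S.smp K R)) u₁) ≫
          S.smpHom (S.ε K) (𝟙 (S.smp R L)) ≫ S.γ K R L ≫ S.smpHom (S.ε K) (𝟙 L) := by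
        rw [smp_swap]; simp only [Category.assoc]
    _ = S.smpHom (𝟙 K) u₂ ≫ S.smpHom (𝟙 K) (S.smpHom (𝟙 R) u₁) ≫
          S.γ K R (S.smp R L) ≫ S.smpHom (S.ε K) (𝟙 (S.smp R L)) ≫
          S.γ K R L ≫ S.smpHom (S.ε K) (𝟙 L) := by
        rw [h2]; simp only [Category.assoc]
    _ = S.smpHom (𝟙 K) u₂ ≫ S.smpHom (𝟙 K) (S.smpHom (𝟙 R) u₁) ≫
          S.smpHom (𝟙 K) (S.μ L) ≫ S.γ K R L ≫ S.smpHom (S.ε K) (𝟙 L) := by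
        slice_lhs 3 6 => rw [theta_comp]
    _ = S.smpHom (𝟙 K) (u₂ ≫ S.smpHom (𝟙 R) u₁ ≫ S.μ L) ≫
          S.γ K R L ≫ S.smpHom (S.ε K) (𝟙 L) := by
        rw [← Category.assoc, ← Category.assoc, smp_fuse, smp_fuse, Category.comp_id,
          Category.comp_id, Category.assoc, Category.assoc]
    _ = S.smpHom (𝟙 K) (S.η L ≫ S.smpHom (r₁ ≫ r₂) (𝟙 L)) ≫
          S.γ K R L ≫ S.smpHom (S.ε K) (𝟙 L) := by
        rw [hu₁, hu₂, u_comp]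

end Aux

/-- Lemma 4.1 of Szlachányi.  For any objects `K`, `L` of a
right-monoidal category and `E = End R`, the map
`ρ(r) := (ε_K ⋆ L) ∘ γ_{K,R,L} ∘ (K ⋆ (r ⋆ L)) ∘ (K ⋆ η_L)` is a right action of
the monoid `E` on `K ⋆ L` (unital and anti-multiplicative), it is natural in
`K` and `L`, and in particular it commutes with `a ⋆ L` and `K ⋆ b` for any
endomorphisms `a` of `K` and `b` of `L` (such as left `E`-actions `λ_K(r')`,
`λ_L(r')`). -/
theorem rho_right_action (S : RightMonoidalStruct C R) :
    (∀ K L : C, rhoAct S K L (𝟙 R) = 𝟙 (S.smp K L)) ∧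
    (∀ (K L : C) (r₁ r₂ : R ⟶ R),
        rhoAct S K L r₂ ≫ rhoAct S K L r₁ = rhoAct S K L (r₁ ≫ r₂)) ∧
    (∀ {K K' L L' : C} (f : K ⟶ K') (g : L ⟶ L') (r : R ⟶ R),
        S.smpHom f g ≫ rhoAct S K' L' r = rhoAct S K L r ≫ S.smpHom f g) ∧
    (∀ (K L : C) (a : K ⟶ K) (r : R ⟶ R),
        S.smpHom a (𝟙 L) ≫ rhoAct S K L r = rhoAct S K L r ≫ S.smpHom a (𝟙 L)) ∧
    (∀ (K L : C) (b : L ⟶ L) (r : R ⟶ R),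
        S.smpHom (𝟙 K) b ≫ rhoAct S K L r = rhoAct S K L r ≫ S.smpHom (𝟙 K) b) := by
  refine ⟨rho_unit S, rho_mul S, fun f g r => rho_nat S f g r,
    fun K L a r => rho_nat S a (𝟙 L) r, fun K L b r => rho_nat S (𝟙 K) b r⟩
end

section
/- Let ⟨𝓔, ⊗, R, α, ℓ⁻¹, r⟩ be a right-monoidal category (unit maps ℓ⁻¹_N : N → R⊗N and r_M : M⊗R → M) and ⟨O, ω, ι⟩ a monad on 𝓔. Then the opmonoidal structures on O, i.e. pairs (O^{M,N} : O(M⊗N) → OM⊗ON natural, O⁰ : OR → R) satisfying (opmon1) α_{OL,OM,ON}∘(OL⊗O^{M,N})∘O^{L,M⊗N} = (O^{L,M}⊗ON)∘O^{L⊗M,N}∘Oα_{L,M,N}, (opmon2) (O⁰⊗ON)∘O^{R,N}∘Oℓ⁻¹_N = ℓ⁻¹_{ON}, (opmon3) r_{OM}∘(OM⊗O⁰)∘O^{M,R} = Or_M, (opmon4) (ω_M⊗ω_N)∘O^{OM,ON}∘OO^{M,N} = O^{M,N}∘ω_{M⊗N}, (opmon5) O⁰∘ω_R = O⁰∘OO⁰,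 (opmon6) O^{M,N}∘ι_{M⊗N} = ι_M⊗ι_N, (opmon7) O⁰∘ι_R = id_R, are in bijection with pairs (h_{M,N} : O(M⊗ON) → OM⊗ON natural, the same O⁰) satisfying (H0) (OM⊗ω_N)∘h_{M,ON} = h_{M,N}∘O(M⊗ω_N), (H1) (h_{L,M}⊗ON)∘h_{L⊗OM,N}∘Oα_{L,OM,ON}∘O(L⊗h_{M,N}) = α_{OL,OM,ON}∘(OL⊗h_{M,N})∘h_{L,M⊗ON}, (H2) h_{M,N}∘ι_{M⊗ON} = ι_M⊗ON, (H3) (O⁰⊗ON)∘h_{R,N}∘Oℓ⁻¹_{ON} = ℓ⁻¹_{ON}∘ω_N, (H4) r_{OM}∘(OM⊗O⁰)∘h_{M,R} = Or_M∘O(M⊗O⁰), (H5) (ω_M⊗ON)∘h_{OM,N}∘Oh_{M,N} = h_{M,N}∘ω_{M⊗ON}, (H6) O⁰∘ι_R = id_R. The bijection is given by h_{M,N} = (OM⊗ω_N)∘O^{M,ON} and O^{M,N} = h_{M,N}∘O(M⊗ι_N). -/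
open CategoryTheory

universe v u

variable {C : Type u} [Category.{v} C] {R : C}

/-- A monad `⟨O, ω, ι⟩` on `C`, given by explicit data. -/
structure MonadStr (C : Type u) [Category.{v} C] where
  obj : C → C
  map : ∀ {X Y : C}, (X ⟶ Y) → (obj X ⟶ obj Y)
  map_id : ∀ X : C, map (𝟙 X) = 𝟙 (obj X)
  map_comp : ∀ {X Y Z : C} (f : X ⟶ Y) (g : Y ⟶ Z), map (f ≫ g) = map f ≫ map g
  ω : ∀ X : C, obj (obj X) ⟶ obj X
  ι : ∀ X : C, X ⟶ obj X
  ω_natural : ∀ {X Y : C} (f : X ⟶ Y), map (map f) ≫ ω Y = ω X ≫ map f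
  ι_natural : ∀ {X Y : C} (f : X ⟶ Y), f ≫ ι Y = ι X ≫ map f
  ω_assoc : ∀ X : C, map (ω X) ≫ ω X = ω (obj X) ≫ ω X
  ω_unit_left : ∀ X : C, ι (obj X) ≫ ω X = 𝟙 (obj X)
  ω_unit_right : ∀ X : C, map (ι X) ≫ ω X = 𝟙 (obj X)

/-- The seven opmonoidality axioms (opmon1)–(opmon7), together with naturality,
making a monad `O` on the right-monoidal category `⟨𝓔, ⊗, R, α, ℓ⁻¹, r⟩` an
opmonoidal monad (`⊗`-bimonad). -/
def IsOpmonoidal (S : RightMonoidalStruct C R) (O : MonadStr C)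
    (O2 : ∀ M N : C, O.obj (S.smp M N) ⟶ S.smp (O.obj M) (O.obj N))
    (O0 : O.obj R ⟶ R) : Prop :=
  (∀ {M M' N N' : C} (f : M ⟶ M') (g : N ⟶ N'),
      O.map (S.smpHom f g) ≫ O2 M' N' = O2 M N ≫ S.smpHom (O.map f) (O.map g)) ∧
  (∀ L M N : C,
      O2 L (S.smp M N) ≫ S.smpHom (𝟙 (O.obj L)) (O2 M N)
          ≫ S.γ (O.obj L) (O.obj M) (O.obj N)
        = O.map (S.γ L M N) ≫ O2 (S.smp L M) N ≫ S.smpHom (O2 L M) (𝟙 (O.obj N))) ∧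
  (∀ N : C,
      O.map (S.η N) ≫ O2 R N ≫ S.smpHom O0 (𝟙 (O.obj N)) = S.η (O.obj N)) ∧
  (∀ M : C,
      O2 M R ≫ S.smpHom (𝟙 (O.obj M)) O0 ≫ S.ε (O.obj M) = O.map (S.ε M)) ∧
  (∀ M N : C,
      O.map (O2 M N) ≫ O2 (O.obj M) (O.obj N) ≫ S.smpHom (O.ω M) (O.ω N)
        = O.ω (S.smp M N) ≫ O2 M N) ∧
  (O.ω R ≫ O0 = O.map O0 ≫ O0) ∧
  (∀ M N : C, O.ι (S.smp M N) ≫ O2 M N = S.smpHom (O.ι M) (O.ι N)) ∧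
  (O.ι R ≫ O0 = 𝟙 R)

/-- The fusion-operator axioms (H0)–(H6), together with naturality, for a
natural transformation `h_{M,N} : O(M ⊗ ON) → OM ⊗ ON` and `O⁰ : OR → R`. -/
def IsFusion (S : RightMonoidalStruct C R) (O : MonadStr C)
    (h : ∀ M N : C, O.obj (S.smp M (O.obj N)) ⟶ S.smp (O.obj M) (O.obj N))
    (O0 : O.obj R ⟶ R) : Prop :=
  (∀ {M M' N N' : C} (f : M ⟶ M') (g : N ⟶ N'),
      O.map (S.smpHom f (O.map g)) ≫ h M' N'
        = h M N ≫ S.smpHom (O.map f) (O.map g)) ∧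
  (∀ M N : C,
      h M (O.obj N) ≫ S.smpHom (𝟙 (O.obj M)) (O.ω N)
        = O.map (S.smpHom (𝟙 M) (O.ω N)) ≫ h M N) ∧
  (∀ L M N : C,
      O.map (S.smpHom (𝟙 L) (h M N)) ≫ O.map (S.γ L (O.obj M) (O.obj N))
          ≫ h (S.smp L (O.obj M)) N ≫ S.smpHom (h L M) (𝟙 (O.obj N))
        = h L (S.smp M (O.obj N)) ≫ S.smpHom (𝟙 (O.obj L)) (h M N)
            ≫ S.γ (O.obj L) (O.obj M) (O.obj N)) ∧
  (∀ M N : C,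
      O.ι (S.smp M (O.obj N)) ≫ h M N = S.smpHom (O.ι M) (𝟙 (O.obj N))) ∧
  (∀ N : C,
      O.map (S.η (O.obj N)) ≫ h R N ≫ S.smpHom O0 (𝟙 (O.obj N))
        = O.ω N ≫ S.η (O.obj N)) ∧
  (∀ M : C,
      h M R ≫ S.smpHom (𝟙 (O.obj M)) O0 ≫ S.ε (O.obj M)
        = O.map (S.smpHom (𝟙 M) O0) ≫ O.map (S.ε M)) ∧
  (∀ M N : C,
      O.map (h M N) ≫ h (O.obj M) N ≫ S.smpHom (O.ω M) (𝟙 (O.obj N))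
        = O.ω (S.smp M (O.obj N)) ≫ h M N) ∧
  (O.ι R ≫ O0 = 𝟙 R)

private lemma RightMonoidalStruct.splitR (S : RightMonoidalStruct C R) {Y Y' Y'' : C} (X : C)
    (g : Y ⟶ Y') (g' : Y' ⟶ Y'') :
    S.smpHom (𝟙 X) (g ≫ g') = S.smpHom (𝟙 X) g ≫ S.smpHom (𝟙 X) g' := by
  simpa using S.smpHom_comp (𝟙 X) (𝟙 X) g g'

private lemma RightMonoidalStruct.splitL (S : RightMonoidalStruct C R) {X X' X'' : C}
    (f : X ⟶ X') (f' : X' ⟶ X'') (Y : C) :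
    S.smpHom (f ≫ f') (𝟙 Y) = S.smpHom f (𝟙 Y) ≫ S.smpHom f' (𝟙 Y) := by
  simpa using S.smpHom_comp f f' (𝟙 Y) (𝟙 Y)

private lemma RightMonoidalStruct.swapLR (S : RightMonoidalStruct C R) {X X' Y Y' : C}
    (f : X ⟶ X') (g : Y ⟶ Y') :
    S.smpHom (𝟙 X) g ≫ S.smpHom f (𝟙 Y') = S.smpHom f (𝟙 Y) ≫ S.smpHom (𝟙 X') g := by
  rw [← S.smpHom_comp, ← S.smpHom_comp]; simp

/-- Proposition 7.1 of Szlachányi, after Bruguières, Lack and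
Virelizier.  For a monad `⟨O, ω, ι⟩` on a right-monoidal category
`⟨𝓔, ⊗, R, α, ℓ⁻¹, r⟩`, the opmonoidal structures `(O², O⁰)` on `O` are in
bijection with the pairs `(h, O⁰)` of a fusion operator and the same `O⁰`,
via `h_{M,N} = (OM ⊗ ω_N) ∘ O^{M,ON}` and `O^{M,N} = h_{M,N} ∘ O(M ⊗ ι_N)`. -/
theorem fusion_operator_bijection (S : RightMonoidalStruct C R) (O : MonadStr C) :
    (∀ (O2 : ∀ M N : C, O.obj (S.smp M N) ⟶ S.smp (O.obj M) (O.obj N))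
        (O0 : O.obj R ⟶ R), IsOpmonoidal S O O2 O0 →
        IsFusion S O
          (fun M N => O2 M (O.obj N) ≫ S.smpHom (𝟙 (O.obj M)) (O.ω N)) O0) ∧
    (∀ (h : ∀ M N : C, O.obj (S.smp M (O.obj N)) ⟶ S.smp (O.obj M) (O.obj N))
        (O0 : O.obj R ⟶ R), IsFusion S O h O0 →
        IsOpmonoidal S O
          (fun M N => O.map (S.smpHom (𝟙 M) (O.ι N)) ≫ h M N) O0) ∧
    (∀ (O2 : ∀ M N : C, O.obj (S.smp M N) ⟶ S.smp (O.obj M) (O.obj N))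
        (O0 : O.obj R ⟶ R), IsOpmonoidal S O O2 O0 →
        ∀ M N : C,
          O.map (S.smpHom (𝟙 M) (O.ι N))
              ≫ (O2 M (O.obj N) ≫ S.smpHom (𝟙 (O.obj M)) (O.ω N))
            = O2 M N) ∧
    (∀ (h : ∀ M N : C, O.obj (S.smp M (O.obj N)) ⟶ S.smp (O.obj M) (O.obj N))
        (O0 : O.obj R ⟶ R), IsFusion S O h O0 →
        ∀ M N : C,
          (O.map (S.smpHom (𝟙 M) (O.ι (O.obj N))) ≫ h M (O.obj N))
              ≫ S.smpHom (𝟙 (O.obj M)) (O.ω N)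
            = h M N) := by
  refine ⟨?_, ?_, ?_, ?_⟩
  · rintro O2 O0 ⟨nat, o1, o2, o3, o4, o5, o6, o7⟩
    refine ⟨?_, ?_, ?_, ?_, ?_, ?_, ?_, o7⟩
    · -- naturality
      intro M M' N N' f g
      rw [← Category.assoc, nat f (O.map g), Category.assoc, Category.assoc,
        ← S.smpHom_comp, ← S.smpHom_comp, Category.comp_id, Category.id_comp,
        O.ω_natural g]
    · -- H0
      intro M N
      rw [← Category.assoc (O.map _), nat (𝟙 M) (O.ω N), O.map_id]
      simp only [Category.assoc, ← S.smpHom_comp, Category.id_comp, Category.comp_id]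
      rw [O.ω_assoc]
    · -- H1
      intro L M N
      beta_reduce
      rw [S.splitR L (O2 M (O.obj N)) (S.smpHom (𝟙 (O.obj M)) (O.ω N)), O.map_comp,
        S.splitL (O2 L (O.obj M)) (S.smpHom (𝟙 (O.obj L)) (O.ω M)) (O.obj N),
        S.splitR (O.obj L) (O2 M (O.obj N)) (S.smpHom (𝟙 (O.obj M)) (O.ω N))]
      simp only [Category.assoc]
      slice_lhs 2 3 => rw [← O.map_comp, S.γ_natural (𝟙 L) (𝟙 (O.obj M)) (O.ω N),
        S.smpHom_id, O.map_comp]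
      slice_lhs 3 4 => rw [nat (𝟙 (S.smp L (O.obj M))) (O.ω N), O.map_id]
      slice_lhs 5 6 => rw [S.swapLR (O2 L (O.obj M)) (O.ω N)]
      slice_lhs 4 5 => rw [S.swapLR (O2 L (O.obj M)) (O.map (O.ω N))]
      slice_lhs 2 4 => rw [← o1]
      slice_lhs 1 2 => rw [nat (𝟙 L) (O2 M (O.obj N)), O.map_id]
      slice_lhs 5 7 =>
        rw [← S.smpHom_comp, ← S.smpHom_comp]
        simp only [Category.id_comp, Category.comp_id]
        rw [O.ω_assoc]
      slice_lhs 4 5 => rw [← S.γ_natural (𝟙 (O.obj L)) (O.ω M) (O.ω (O.obj N) ≫ O.ω N)]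
      slice_rhs 2 3 => rw [← S.splitR]
      rw [← o4 M (O.obj N)]
      simp only [S.splitR, Category.assoc]
      slice_rhs 4 5 =>
        rw [← S.smpHom_comp, ← S.smpHom_comp]
        simp only [Category.id_comp, Category.comp_id]
    · -- H2
      intro M N
      rw [← Category.assoc, o6, ← S.smpHom_comp, Category.comp_id, O.ω_unit_left]
    · -- H3
      intro N
      simp only [Category.assoc]
      slice_lhs 3 4 => rw [S.swapLR O0 (O.ω N)]
      slice_lhs 1 3 => rw [o2 (O.obj N)]
      rw [S.η_natural (O.ω N)]
    · -- H4
      intro M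
      simp only [Category.assoc]
      slice_lhs 2 3 => rw [← S.splitR, o5, S.splitR]
      slice_lhs 1 2 => rw [← O.map_id M, ← nat (𝟙 M) O0]
      simp only [Category.assoc]
      slice_lhs 2 4 => rw [o3 M]
    · -- H5
      intro M N
      rw [O.map_comp]
      simp only [Category.assoc]
      slice_lhs 2 3 => rw [nat (𝟙 (O.obj M)) (O.ω N), O.map_id]
      slice_lhs 3 5 =>
        rw [← S.smpHom_comp, ← S.smpHom_comp]
        simp only [Category.id_comp, Category.comp_id]
        rw [O.ω_assoc, ← Category.comp_id (O.ω M), S.smpHom_comp]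
      slice_lhs 1 3 => rw [o4 M (O.obj N)]
      simp only [Category.assoc]
  · rintro h O0 ⟨nat, h0, h1, h2, h3, h4, h5, h6⟩
    refine ⟨?_, ?_, ?_, ?_, ?_, ?_, ?_, h6⟩
    · -- naturality
      intro M M' N N' f g
      beta_reduce
      rw [← Category.assoc, ← O.map_comp, ← S.smpHom_comp, Category.comp_id, O.ι_natural g,
        show S.smpHom f (O.ι N ≫ O.map g) = S.smpHom (𝟙 M) (O.ι N) ≫ S.smpHom f (O.map g) by
          rw [← S.smpHom_comp, Category.id_comp],
        O.map_comp, Category.assoc, nat f g]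
      simp only [Category.assoc]
    · -- o1
      intro L M N
      beta_reduce
      rw [S.splitR (O.obj L) (O.map (S.smpHom (𝟙 M) (O.ι N))) (h M N),
        S.splitL (O.map (S.smpHom (𝟙 L) (O.ι M))) (h L M) (O.obj N)]
      simp only [Category.assoc]
      -- LHS: 1 Omap(1⊗ι_{M⊗N}); 2 h_{L,M⊗N}; 3 (1⊗Omap(1⊗ι_N)); 4 (1⊗h_{M,N}); 5 γ
      slice_lhs 2 3 => rw [← O.map_id L, ← nat (𝟙 L) (S.smpHom (𝟙 M) (O.ι N))]
      simp only [Category.assoc]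
      slice_lhs 1 2 => rw [← O.map_comp, ← S.smpHom_comp, Category.id_comp,
        ← O.ι_natural (S.smpHom (𝟙 M) (O.ι N)),
        show S.smpHom (𝟙 L) (S.smpHom (𝟙 M) (O.ι N) ≫ O.ι (S.smp M (O.obj N)))
            = S.smpHom (𝟙 L) (S.smpHom (𝟙 M) (O.ι N))
              ≫ S.smpHom (𝟙 L) (O.ι (S.smp M (O.obj N))) from
          S.splitR L (S.smpHom (𝟙 M) (O.ι N)) (O.ι (S.smp M (O.obj N))),
        O.map_comp]
      simp only [Category.assoc]
      -- LHS: 1 Omap(1⊗(1⊗ι_N)); 2 Omap(1⊗ι_{M⊗ON}); 3 h_{L,M⊗ON}; 4 (1⊗h); 5 γ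
      slice_lhs 3 5 => rw [← h1 L M N]
      -- LHS: 1 Omap(1⊗(1⊗ι)); 2 Omap(1⊗ι); 3 Omap(1⊗h); 4 Omapγ; 5 h; 6 (h⊗1)
      slice_lhs 2 3 => rw [← O.map_comp, ← S.splitR, h2 M N]
      -- RHS: 1 Omapγ; 2 Omap(1⊗ι_N); 3 h_{L⊗M,N}; 4 (Omap(1⊗ι_M)⊗1); 5 (h_{L,M}⊗1)
      slice_rhs 3 4 => rw [← O.map_id N, ← nat (S.smpHom (𝟙 L) (O.ι M)) (𝟙 N), O.map_id]
      simp only [Category.assoc]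
      slice_lhs 1 3 => rw [← O.map_comp, ← O.map_comp]
      slice_rhs 1 3 => rw [← O.map_comp, ← O.map_comp]
      congr 2
      rw [← Category.assoc, ← S.smpHom_comp, ← S.smpHom_comp]
      simp only [Category.id_comp, Category.comp_id]
      rw [S.γ_natural, ← S.smpHom_comp]
      simp only [Category.id_comp, Category.comp_id]
    · -- o2
      intro N
      beta_reduce
      simp only [Category.assoc]
      slice_lhs 1 2 => rw [← O.map_comp, ← S.η_natural (O.ι N), O.map_comp]
      simp only [Category.assoc]
      slice_lhs 2 4 => rw [h3 N]
      slice_lhs 1 2 => rw [O.ω_unit_right]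
      simp
    · -- o3
      intro M
      beta_reduce
      simp only [Category.assoc]
      slice_lhs 2 4 => rw [h4 M]
      slice_lhs 1 2 => rw [← O.map_comp, ← S.smpHom_comp, Category.id_comp, h6,
        S.smpHom_id, O.map_id]
      simp
    · -- o4
      intro M N
      beta_reduce
      rw [O.map_comp]
      simp only [Category.assoc]
      rw [show S.smpHom (O.ω M) (O.ω N)
          = S.smpHom (𝟙 (O.obj (O.obj M))) (O.ω N) ≫ S.smpHom (O.ω M) (𝟙 (O.obj N)) from by
        rw [← S.smpHom_comp]; simp]
      slice_lhs 4 5 => rw [h0 (O.obj M) N]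
      slice_lhs 3 4 => rw [← O.map_comp, ← S.smpHom_comp, Category.id_comp, O.ω_unit_left,
        S.smpHom_id, O.map_id]
      simp only [Category.id_comp, Category.assoc]
      slice_lhs 2 4 => rw [h5 M N]
      slice_lhs 1 2 => rw [O.ω_natural (S.smpHom (𝟙 M) (O.ι N))]
      simp only [Category.assoc]
    · -- o5
      have e1 : S.η (O.obj R) ≫ S.smpHom (𝟙 R) O0 ≫ S.ε R = O0 := by
        rw [← Category.assoc, ← S.η_natural O0, Category.assoc, S.unit_counit,
          Category.comp_id]
      conv_lhs => rw [← e1]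
      slice_lhs 1 2 => rw [← h3 R]
      simp only [Category.assoc]
      slice_lhs 3 4 => rw [← S.swapLR O0 O0]
      slice_lhs 4 5 => rw [S.ε_natural O0]
      slice_lhs 2 4 => rw [h4 R]
      slice_lhs 1 3 => rw [← O.map_comp, ← O.map_comp, e1]
    · -- o6
      intro M N
      beta_reduce
      rw [← Category.assoc, ← O.ι_natural (S.smpHom (𝟙 M) (O.ι N)), Category.assoc, h2 M N,
        ← S.smpHom_comp, Category.id_comp, Category.comp_id]
  · rintro O2 O0 ⟨nat, o1, o2, o3, o4, o5, o6, o7⟩ M N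
    rw [← Category.assoc, nat (𝟙 M) (O.ι N), Category.assoc, ← S.smpHom_comp,
      O.map_id, Category.id_comp, O.ω_unit_right, S.smpHom_id, Category.comp_id]
  · rintro h O0 ⟨nat, h0, h2, h1, h3, h4, h5, h6⟩ M N
    rw [Category.assoc, h0 M N, ← Category.assoc, ← O.map_comp, ← S.smpHom_comp,
      Category.id_comp, O.ω_unit_left, S.smpHom_id, O.map_id, Category.id_comp]
end

section
/- Let ⟨O, ω, ι, O², O⁰⟩ be a ⊗-bimonad on the right-monoidal category ⟨𝓔, ⊗, R, α, ℓ⁻¹, r⟩. Then the data M⊙N := M⊗ON, γ̇_{L,M,N} := α_{L,OM,ON}∘(L⊗(OM⊗ω_N))∘(L⊗O^{M,ON}), η̇_M := ℓ⁻¹_{OM}∘ι_M, ε̇_M := r_M∘(M⊗O⁰) define a right-monoidal structure ⟨𝓔, ⊙, R, γ̇, η̇, ε̇⟩ on 𝓔. Moreover, ℓ⁻¹_{ON} : ON → R⊗ON = ṪN defines a monad morphism from O to the canonical monad Ṫ = R⊙− of the ⊙-structure, i.e., μ̇_N∘ℓ⁻¹_{OṪN}∘Oℓ⁻¹_{ON}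 = ℓ⁻¹_{ON}∘ω_N and η̇_N = ℓ⁻¹_{ON}∘ι_N. -/
open CategoryTheory

universe v u

variable {C : Type u} [Category.{v} C] {R : C}

section
variable (S : RightMonoidalStruct C R) (O : MonadStr C)
  (O2 : ∀ M N : C, O.obj (S.smp M N) ⟶ S.smp (O.obj M) (O.obj N))
  (O0 : O.obj R ⟶ R)

/-- The skew-monoidal product `M ⊙ N := M ⊗ ON` induced by a bimonad. -/
def odot (M N : C) : C := S.smp M (O.obj N)

/-- `⊙` on morphisms: `f ⊙ g := f ⊗ Og`. -/
def odotHom {M M' N N' : C} (f : M ⟶ M') (g : N ⟶ N') :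
    odot S O M N ⟶ odot S O M' N' := S.smpHom f (O.map g)

/-- The induced skew-associator
`γ̇_{L,M,N} := α_{L,OM,ON} ∘ (L ⊗ (OM ⊗ ω_N)) ∘ (L ⊗ O^{M,ON})`. -/
def gdot (L M N : C) : odot S O L (odot S O M N) ⟶ odot S O (odot S O L M) N :=
  S.smpHom (𝟙 L) (O2 M (O.obj N))
    ≫ S.smpHom (𝟙 L) (S.smpHom (𝟙 (O.obj M)) (O.ω N))
    ≫ S.γ L (O.obj M) (O.obj N)

/-- The induced unit `η̇_M := ℓ⁻¹_{OM} ∘ ι_M`. -/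
def etadot (M : C) : M ⟶ odot S O R M := O.ι M ≫ S.η (O.obj M)

/-- The induced counit `ε̇_M := r_M ∘ (M ⊗ O⁰)`. -/
def epsdot (M : C) : odot S O M R ⟶ M := S.smpHom (𝟙 M) O0 ≫ S.ε M

/-- The multiplication `μ̇_M := (ε̇_R ⊙ M) ∘ γ̇_{R,R,M}` of the canonical monad
`Ṫ = R ⊙ -` of the induced structure. -/
def mudot (M : C) : odot S O R (odot S O R M) ⟶ odot S O R M :=
  gdot S O O2 R R M ≫ odotHom S O (epsdot S O O0 R) (𝟙 M)

end

/-!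
The composite `h_{M,N} := (OM ⊗ ω_N) ∘ O^{M,ON} : O(M ⊗ ON) → OM ⊗ ON` is a fusion operator, and
`γ̇_{L,M,N} = α_{L,OM,ON} ∘ (L ⊗ h_{M,N})`. Each axiom of the `⊙`-structure then reduces to one
fusion axiom and the matching axiom of `⊗`: the pentagon to the fusion pentagon, the unit and
counit triangles to the compatibility of `h` with `ι` and with `O⁰`, and both the mixed triangle
and the multiplicativity of `ℓ⁻¹_{ON}` to `(O⁰ ⊗ ON) ∘ h_{R,N} ∘ Oℓ⁻¹_{ON} = ℓ⁻¹_{ON} ∘ ω_N`.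
Deriving the fusion pentagon from the bimonad pentagon needs
`(ω_M ⊗ ON) ∘ h_{OM,N} ∘ Oh_{M,N} = h_{M,N} ∘ ω_{M ⊗ ON}`, a consequence of the
multiplicativity of `O²`.
-/

namespace RightMonoidalStruct

variable (S : RightMonoidalStruct C R)

theorem smpHom_comp_smpHom {X X' X'' Y Y' Y'' : C} (f : X ⟶ X') (f' : X' ⟶ X'')
    (g : Y ⟶ Y') (g' : Y' ⟶ Y'') :
    S.smpHom f g ≫ S.smpHom f' g' = S.smpHom (f ≫ f') (g ≫ g') :=
  (S.smpHom_comp f f' g g').symm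

theorem smpHom_comp_smpHom_assoc {X X' X'' Y Y' Y'' Z : C} (f : X ⟶ X') (f' : X' ⟶ X'')
    (g : Y ⟶ Y') (g' : Y' ⟶ Y'') (z : S.smp X'' Y'' ⟶ Z) :
    S.smpHom f g ≫ S.smpHom f' g' ≫ z = S.smpHom (f ≫ f') (g ≫ g') ≫ z := by
  rw [← Category.assoc, smpHom_comp_smpHom]

theorem smpHom_id_comp (X : C) {Y Y' Y'' : C} (g : Y ⟶ Y') (g' : Y' ⟶ Y'') :
    S.smpHom (𝟙 X) (g ≫ g') = S.smpHom (𝟙 X) g ≫ S.smpHom (𝟙 X) g' := by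
  rw [smpHom_comp_smpHom, Category.id_comp]

theorem smpHom_comp_id {X X' X'' : C} (f : X ⟶ X') (f' : X' ⟶ X'') (Y : C) :
    S.smpHom (f ≫ f') (𝟙 Y) = S.smpHom f (𝟙 Y) ≫ S.smpHom f' (𝟙 Y) := by
  rw [smpHom_comp_smpHom, Category.id_comp]

theorem γ_comp_smpHom_id (L M : C) {N N' : C} (k : N ⟶ N') :
    S.γ L M N ≫ S.smpHom (𝟙 (S.smp L M)) k
      = S.smpHom (𝟙 L) (S.smpHom (𝟙 M) k) ≫ S.γ L M N' := by
  simpa only [S.smpHom_id] using (S.γ_natural (𝟙 L) (𝟙 M) k).symm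

theorem η_comp_smpHom_comp_ε {X : C} (f : X ⟶ R) : S.η X ≫ S.smpHom (𝟙 R) f ≫ S.ε R = f := by
  rw [← Category.assoc, ← S.η_natural, Category.assoc, S.unit_counit, Category.comp_id]

end RightMonoidalStruct

section Induced

variable (S : RightMonoidalStruct C R) (O : MonadStr C) (O0 : O.obj R ⟶ R)

theorem odotHom_id (M N : C) : odotHom S O (𝟙 M) (𝟙 N) = 𝟙 (odot S O M N) := by
  dsimp only [odotHom, odot]
  rw [O.map_id, S.smpHom_id]

theorem odotHom_comp {X X' X'' Y Y' Y'' : C} (f : X ⟶ X') (f' : X' ⟶ X'')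
    (g : Y ⟶ Y') (g' : Y' ⟶ Y'') :
    odotHom S O (f ≫ f') (g ≫ g') = odotHom S O f g ≫ odotHom S O f' g' := by
  dsimp only [odotHom, odot]
  rw [O.map_comp, S.smpHom_comp]

theorem etadot_naturality {M M' : C} (f : M ⟶ M') :
    f ≫ etadot S O M' = etadot S O M ≫ odotHom S O (𝟙 R) f := by
  dsimp only [etadot, odotHom, odot]
  rw [reassoc_of% O.ι_natural f, S.η_natural, Category.assoc]

theorem epsdot_naturality {M M' : C} (f : M ⟶ M') :
    odotHom S O f (𝟙 R) ≫ epsdot S O O0 M' = epsdot S O O0 M ≫ f := by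
  have hsplit : S.smpHom f O0 = S.smpHom (𝟙 M) O0 ≫ S.smpHom f (𝟙 R) := by
    rw [S.smpHom_comp_smpHom, Category.id_comp, Category.comp_id]
  dsimp only [odotHom, epsdot, odot]
  rw [O.map_id, S.smpHom_comp_smpHom_assoc, Category.id_comp, Category.comp_id,
    hsplit, Category.assoc, S.ε_natural, Category.assoc]

theorem etadot_comp_epsdot (hι : O.ι R ≫ O0 = 𝟙 R) :
    etadot S O R ≫ epsdot S O O0 R = 𝟙 R := by
  dsimp only [etadot, epsdot, odot]
  rw [Category.assoc, S.η_comp_smpHom_comp_ε, hι]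

end Induced

def fusionOp (S : RightMonoidalStruct C R) (O : MonadStr C)
    (O2 : ∀ M N : C, O.obj (S.smp M N) ⟶ S.smp (O.obj M) (O.obj N)) (M N : C) :
    O.obj (S.smp M (O.obj N)) ⟶ S.smp (O.obj M) (O.obj N) :=
  O2 M (O.obj N) ≫ S.smpHom (𝟙 (O.obj M)) (O.ω N)

section FusionOp

variable {S : RightMonoidalStruct C R} {O : MonadStr C}
  {O2 : ∀ M N : C, O.obj (S.smp M N) ⟶ S.smp (O.obj M) (O.obj N)} {O0 : O.obj R ⟶ R}

theorem fusionOp_naturality (hop : IsOpmonoidal S O O2 O0) {M M' N N' : C}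
    (f : M ⟶ M') (g : N ⟶ N') :
    O.map (S.smpHom f (O.map g)) ≫ fusionOp S O O2 M' N'
      = fusionOp S O O2 M N ≫ S.smpHom (O.map f) (O.map g) := by
  obtain ⟨hnat, -⟩ := hop
  rw [fusionOp, fusionOp, reassoc_of% hnat f (O.map g), Category.assoc, S.smpHom_comp_smpHom,
    S.smpHom_comp_smpHom, Category.comp_id, Category.id_comp, O.ω_natural]

theorem fusionOp_comp_smpHom_ω (hop : IsOpmonoidal S O O2 O0) (M N : C) :
    fusionOp S O O2 M (O.obj N) ≫ S.smpHom (𝟙 (O.obj M)) (O.ω N)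
      = O.map (S.smpHom (𝟙 M) (O.ω N)) ≫ fusionOp S O O2 M N := by
  obtain ⟨hnat, -⟩ := hop
  rw [fusionOp, fusionOp, reassoc_of% hnat (𝟙 M) (O.ω N), O.map_id, Category.assoc,
    S.smpHom_comp_smpHom, S.smpHom_comp_smpHom, Category.id_comp, O.ω_assoc]

theorem map_fusionOp_comp_fusionOp (hop : IsOpmonoidal S O O2 O0) (M N : C) :
    O.map (fusionOp S O O2 M N) ≫ fusionOp S O O2 (O.obj M) N
        ≫ S.smpHom (O.ω M) (𝟙 (O.obj N))
      = O.ω (S.smp M (O.obj N)) ≫ fusionOp S O O2 M N := by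
  obtain ⟨hnat, -, -, -, hmul, -⟩ := hop
  simp only [fusionOp, O.map_comp, Category.assoc, S.smpHom_comp_smpHom, Category.id_comp,
    Category.comp_id]
  rw [reassoc_of% hnat (𝟙 (O.obj M)) (O.ω N), O.map_id, S.smpHom_comp_smpHom, Category.id_comp,
    O.ω_assoc, ← Category.comp_id (O.ω M), ← S.smpHom_comp_smpHom, reassoc_of% hmul M (O.obj N)]

theorem fusionOp_pentagon (hop : IsOpmonoidal S O O2 O0) (L M N : C) :
    O.map (S.smpHom (𝟙 L) (fusionOp S O O2 M N)) ≫ O.map (S.γ L (O.obj M) (O.obj N))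
        ≫ fusionOp S O O2 (S.smp L (O.obj M)) N
        ≫ S.smpHom (fusionOp S O O2 L M) (𝟙 (O.obj N))
      = fusionOp S O O2 L (S.smp M (O.obj N)) ≫ S.smpHom (𝟙 (O.obj L)) (fusionOp S O O2 M N)
          ≫ S.γ (O.obj L) (O.obj M) (O.obj N) := by
  have hfusion := map_fusionOp_comp_fusionOp hop M N
  have hsplit : O2 (O.obj M) (O.obj N) ≫ S.smpHom (O.ω M) (O.ω N)
      = fusionOp S O O2 (O.obj M) N ≫ S.smpHom (O.ω M) (𝟙 (O.obj N)) := by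
    rw [fusionOp, Category.assoc, S.smpHom_comp_smpHom, Category.id_comp, Category.comp_id]
  obtain ⟨hnat, hassoc, -⟩ := hop
  calc _ = O.map (S.smpHom (𝟙 L) (fusionOp S O O2 M N))
          ≫ (O.map (S.γ L (O.obj M) (O.obj N)) ≫ O2 (S.smp L (O.obj M)) (O.obj N)
            ≫ S.smpHom (O2 L (O.obj M)) (𝟙 (O.obj (O.obj N))))
          ≫ S.smpHom (S.smpHom (𝟙 (O.obj L)) (O.ω M)) (O.ω N) := by
        simp only [fusionOp, Category.assoc, S.smpHom_comp_smpHom, Category.id_comp,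
          Category.comp_id]
    _ = O2 L (O.obj (S.smp M (O.obj N))) ≫ S.smpHom (𝟙 (O.obj L))
          (O.map (fusionOp S O O2 M N) ≫ O2 (O.obj M) (O.obj N) ≫ S.smpHom (O.ω M) (O.ω N))
          ≫ S.γ (O.obj L) (O.obj M) (O.obj N) := by
        rw [← hassoc]
        simp only [Category.assoc, reassoc_of% hnat (𝟙 L) (fusionOp S O O2 M N), O.map_id,
          ← S.γ_natural, S.smpHom_comp_smpHom_assoc, Category.id_comp]
    _ = _ := by
        rw [hsplit, hfusion, fusionOp.eq_def S O O2 L, Category.assoc, S.smpHom_comp_smpHom_assoc,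
          Category.id_comp]

theorem ι_comp_fusionOp (hop : IsOpmonoidal S O O2 O0) (M N : C) :
    O.ι (S.smp M (O.obj N)) ≫ fusionOp S O O2 M N = S.smpHom (O.ι M) (𝟙 (O.obj N)) := by
  obtain ⟨-, -, -, -, -, -, hι, -⟩ := hop
  rw [fusionOp, reassoc_of% hι M (O.obj N), S.smpHom_comp_smpHom, Category.comp_id,
    O.ω_unit_left]

theorem map_η_comp_fusionOp_comp_smpHom (hop : IsOpmonoidal S O O2 O0) (N : C) :
    O.map (S.η (O.obj N)) ≫ fusionOp S O O2 R N ≫ S.smpHom O0 (𝟙 (O.obj N))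
      = O.ω N ≫ S.η (O.obj N) := by
  obtain ⟨-, -, hunit, -⟩ := hop
  have hswap : S.smpHom (𝟙 (O.obj R)) (O.ω N) ≫ S.smpHom O0 (𝟙 (O.obj N))
      = S.smpHom O0 (𝟙 (O.obj (O.obj N))) ≫ S.smpHom (𝟙 R) (O.ω N) := by
    simp only [S.smpHom_comp_smpHom, Category.id_comp, Category.comp_id]
  rw [fusionOp, Category.assoc, hswap, reassoc_of% hunit (O.obj N), ← S.η_natural]

theorem fusionOp_comp_smpHom_comp_ε (hop : IsOpmonoidal S O O2 O0) (M : C) :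
    fusionOp S O O2 M R ≫ S.smpHom (𝟙 (O.obj M)) O0 ≫ S.ε (O.obj M)
      = O.map (S.smpHom (𝟙 M) O0) ≫ O.map (S.ε M) := by
  obtain ⟨hnat, -, -, hcounit, -, hmul0, -⟩ := hop
  have hsplit : S.smpHom (𝟙 (O.obj M)) (O.map O0 ≫ O0)
      = S.smpHom (O.map (𝟙 M)) (O.map O0) ≫ S.smpHom (𝟙 (O.obj M)) O0 := by
    rw [O.map_id, S.smpHom_comp_smpHom, Category.id_comp]
  rw [fusionOp, Category.assoc, S.smpHom_comp_smpHom_assoc, Category.id_comp, hmul0, hsplit,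
    Category.assoc, ← reassoc_of% hnat (𝟙 M) O0, hcounit]

theorem isFusion_fusionOp (hop : IsOpmonoidal S O O2 O0) :
    IsFusion S O (fusionOp S O O2) O0 :=
  ⟨fusionOp_naturality hop, fusionOp_comp_smpHom_ω hop, fusionOp_pentagon hop,
    ι_comp_fusionOp hop, map_η_comp_fusionOp_comp_smpHom hop, fusionOp_comp_smpHom_comp_ε hop,
    map_fusionOp_comp_fusionOp hop, hop.2.2.2.2.2.2.2⟩

end FusionOp

def fusionAssoc (S : RightMonoidalStruct C R) (O : MonadStr C)
    (h : ∀ M N : C, O.obj (S.smp M (O.obj N)) ⟶ S.smp (O.obj M) (O.obj N)) (L M N : C) :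
    odot S O L (odot S O M N) ⟶ odot S O (odot S O L M) N :=
  S.smpHom (𝟙 L) (h M N) ≫ S.γ L (O.obj M) (O.obj N)

theorem gdot_eq_fusionAssoc (S : RightMonoidalStruct C R) (O : MonadStr C)
    (O2 : ∀ M N : C, O.obj (S.smp M N) ⟶ S.smp (O.obj M) (O.obj N)) (L M N : C) :
    gdot S O O2 L M N = fusionAssoc S O (fusionOp S O O2) L M N := by
  dsimp only [gdot, fusionAssoc, fusionOp, odot]
  rw [S.smpHom_comp_smpHom_assoc, Category.id_comp]

section FusionAssoc

variable {S : RightMonoidalStruct C R} {O : MonadStr C}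
  {h : ∀ M N : C, O.obj (S.smp M (O.obj N)) ⟶ S.smp (O.obj M) (O.obj N)} {O0 : O.obj R ⟶ R}

theorem fusionAssoc_naturality (hh : IsFusion S O h O0) {L L' M M' N N' : C}
    (f : L ⟶ L') (g : M ⟶ M') (k : N ⟶ N') :
    odotHom S O f (odotHom S O g k) ≫ fusionAssoc S O h L' M' N'
      = fusionAssoc S O h L M N ≫ odotHom S O (odotHom S O f g) k := by
  obtain ⟨hnat, -⟩ := hh
  dsimp only [odotHom, fusionAssoc, odot]
  rw [S.smpHom_comp_smpHom_assoc, Category.comp_id, hnat, Category.assoc, ← S.γ_natural,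
    S.smpHom_comp_smpHom_assoc, Category.id_comp]

theorem fusionAssoc_pentagon (hh : IsFusion S O h O0) (K L M N : C) :
    odotHom S O (𝟙 K) (fusionAssoc S O h L M N) ≫ fusionAssoc S O h K (odot S O L M) N
        ≫ odotHom S O (fusionAssoc S O h K L M) (𝟙 N)
      = fusionAssoc S O h K L (odot S O M N) ≫ fusionAssoc S O h (odot S O K L) M N := by
  obtain ⟨-, -, hpent, -⟩ := hh
  dsimp only [odotHom, fusionAssoc, odot]
  calc _ = S.smpHom (𝟙 K) (O.map (S.smpHom (𝟙 L) (h M N)) ≫ O.map (S.γ L (O.obj M) (O.obj N))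
          ≫ h (S.smp L (O.obj M)) N ≫ S.smpHom (h L M) (𝟙 (O.obj N)))
          ≫ S.γ K (S.smp (O.obj L) (O.obj M)) (O.obj N)
          ≫ S.smpHom (S.γ K (O.obj L) (O.obj M)) (𝟙 (O.obj N)) := by
        rw [O.map_id, S.smpHom_comp_id, Category.assoc, ← reassoc_of% S.γ_natural, O.map_comp]
        simp only [Category.assoc, S.smpHom_comp_smpHom_assoc, Category.id_comp]
    _ = _ := by
        rw [hpent, S.smpHom_id_comp, S.smpHom_id_comp, Category.assoc, Category.assoc,
          S.pentagon, Category.assoc, reassoc_of% S.γ_comp_smpHom_id]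

theorem etadot_comp_fusionAssoc (hh : IsFusion S O h O0) (M N : C) :
    etadot S O (odot S O M N) ≫ fusionAssoc S O h R M N = odotHom S O (etadot S O M) (𝟙 N) := by
  obtain ⟨-, -, -, hι, -⟩ := hh
  dsimp only [etadot, fusionAssoc, odotHom, odot]
  rw [Category.assoc, ← reassoc_of% S.η_natural (h M N), S.unit_triangle, reassoc_of% hι,
    O.map_id, S.smpHom_comp_smpHom, Category.comp_id]

theorem fusionAssoc_comp_epsdot (hh : IsFusion S O h O0) (M N : C) :
    fusionAssoc S O h M N R ≫ epsdot S O O0 (odot S O M N)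
      = odotHom S O (𝟙 M) (epsdot S O O0 N) := by
  obtain ⟨-, -, -, -, -, hε, -⟩ := hh
  dsimp only [fusionAssoc, epsdot, odotHom, odot]
  rw [Category.assoc, reassoc_of% S.γ_comp_smpHom_id, S.counit_triangle,
    S.smpHom_comp_smpHom_assoc, S.smpHom_comp_smpHom, Category.id_comp, Category.id_comp,
    Category.assoc, hε, O.map_comp]

theorem fusionAssoc_mixed_triangle (hh : IsFusion S O h O0) (M N : C) :
    odotHom S O (𝟙 M) (etadot S O N) ≫ fusionAssoc S O h M R N
        ≫ odotHom S O (epsdot S O O0 M) (𝟙 N)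
      = 𝟙 (odot S O M N) := by
  obtain ⟨-, -, -, -, hη, -⟩ := hh
  dsimp only [odotHom, etadot, fusionAssoc, epsdot, odot]
  simp only [Category.assoc]
  rw [O.map_id, S.smpHom_comp_id, ← reassoc_of% S.γ_natural (𝟙 M) O0 (𝟙 (O.obj N))]
  simp only [S.smpHom_comp_smpHom_assoc, O.map_comp, Category.assoc, Category.id_comp]
  rw [hη, reassoc_of% O.ω_unit_right, S.mixed_triangle]

theorem map_η_comp_η_comp_fusionAssoc_comp_odotHom (hh : IsFusion S O h O0) (N : C) :
    O.map (S.η (O.obj N)) ≫ S.η (O.obj (S.smp R (O.obj N))) ≫ fusionAssoc S O h R R N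
        ≫ odotHom S O (epsdot S O O0 R) (𝟙 N)
      = O.ω N ≫ S.η (O.obj N) := by
  obtain ⟨-, -, -, -, hη, -⟩ := hh
  dsimp only [fusionAssoc, odotHom, epsdot, odot]
  simp only [Category.assoc]
  rw [← reassoc_of% S.η_natural (h R N), reassoc_of% S.unit_triangle, O.map_id,
    S.smpHom_comp_smpHom, Category.id_comp, S.η_comp_smpHom_comp_ε, hη]

end FusionAssoc

/-- Proposition 7.2 of Szlachányi.  A `⊗`-bimonad
`⟨O, ω, ι, O², O⁰⟩` on a right-monoidal category `⟨𝓔, ⊗, R, α, ℓ⁻¹, r⟩` induces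
a right-monoidal structure `⟨𝓔, ⊙, R, γ̇, η̇, ε̇⟩` with `M ⊙ N := M ⊗ ON`,
and `ℓ⁻¹_{ON} : ON → R ⊗ ON = ṪN` is a monad morphism from `O` to the
canonical monad `Ṫ = R ⊙ -` of the `⊙`-structure. -/
theorem bimonad_induced_skew_monoidal (S : RightMonoidalStruct C R)
    (O : MonadStr C)
    (O2 : ∀ M N : C, O.obj (S.smp M N) ⟶ S.smp (O.obj M) (O.obj N))
    (O0 : O.obj R ⟶ R)
    (hop : IsOpmonoidal S O O2 O0) :
    -- functoriality of `⊙`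
    (∀ M N : C, odotHom S O (𝟙 M) (𝟙 N) = 𝟙 (odot S O M N)) ∧
    (∀ {X X' X'' Y Y' Y'' : C} (f : X ⟶ X') (f' : X' ⟶ X'')
        (g : Y ⟶ Y') (g' : Y' ⟶ Y''),
        odotHom S O (f ≫ f') (g ≫ g') = odotHom S O f g ≫ odotHom S O f' g') ∧
    -- naturality of `γ̇`, `η̇`, `ε̇`
    (∀ {L L' M M' N N' : C} (f : L ⟶ L') (g : M ⟶ M') (h : N ⟶ N'),
        odotHom S O f (odotHom S O g h) ≫ gdot S O O2 L' M' N'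
          = gdot S O O2 L M N ≫ odotHom S O (odotHom S O f g) h) ∧
    (∀ {M M' : C} (f : M ⟶ M'),
        f ≫ etadot S O M' = etadot S O M ≫ odotHom S O (𝟙 R) f) ∧
    (∀ {M M' : C} (f : M ⟶ M'),
        odotHom S O f (𝟙 R) ≫ epsdot S O O0 M' = epsdot S O O0 M ≫ f) ∧
    -- the five skew-monoidal axioms for `⊙`
    (∀ K L M N : C,
        odotHom S O (𝟙 K) (gdot S O O2 L M N)
            ≫ gdot S O O2 K (odot S O L M) N
            ≫ odotHom S O (gdot S O O2 K L M) (𝟙 N)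
          = gdot S O O2 K L (odot S O M N) ≫ gdot S O O2 (odot S O K L) M N) ∧
    (∀ M N : C,
        etadot S O (odot S O M N) ≫ gdot S O O2 R M N
          = odotHom S O (etadot S O M) (𝟙 N)) ∧
    (∀ M N : C,
        gdot S O O2 M N R ≫ epsdot S O O0 (odot S O M N)
          = odotHom S O (𝟙 M) (epsdot S O O0 N)) ∧
    (∀ M N : C,
        odotHom S O (𝟙 M) (etadot S O N) ≫ gdot S O O2 M R N
            ≫ odotHom S O (epsdot S O O0 M) (𝟙 N)
          = 𝟙 (odot S O M N)) ∧
    (etadot S O R ≫ epsdot S O O0 R = 𝟙 R) ∧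
    -- `ℓ⁻¹_{ON}` is a monad morphism from `O` to `Ṫ`
    (∀ N : C,
        O.map (S.η (O.obj N)) ≫ S.η (O.obj (S.smp R (O.obj N)))
            ≫ mudot S O O2 O0 N
          = O.ω N ≫ S.η (O.obj N)) ∧
    (∀ N : C, etadot S O N = O.ι N ≫ S.η (O.obj N)) := by
  have hh := isFusion_fusionOp hop
  simp only [mudot, gdot_eq_fusionAssoc]
  exact ⟨odotHom_id S O, odotHom_comp S O, fusionAssoc_naturality hh, etadot_naturality S O,
    epsdot_naturality S O O0, fusionAssoc_pentagon hh, etadot_comp_fusionAssoc hh,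
    fusionAssoc_comp_epsdot hh, fusionAssoc_mixed_triangle hh,
    etadot_comp_epsdot S O O0 hh.2.2.2.2.2.2.2, map_η_comp_η_comp_fusionAssoc_comp_odotHom hh,
    fun _ => rfl⟩
end

section
/- Let ⋆ and ⊗ be two right-monoidal structures on the same category with the same unit object R (structure maps γ, η, ε and α, ℓ⁻¹, r respectively), and T = R⋆−. Then the assignments t ↦ w, w_{M,N} := (r_M⋆N)∘t_{M,R,N}, and w ↦ t, t_{L,M,N} := w_{L⊗M,N}∘α_{L,M,TN}∘(L⊗w⁻¹_{M,N}), are mutually inverse bijections between: (a) tetrahedral isomorphisms t_{L,M,N} : L⊗(M⋆N) → (L⊗M)⋆N, and (b) natural isomorphisms w_{M,N} : M⊗TN → M⋆N satisfying the heptagon (w_{L,M}⋆N)∘w_{L⊗TM,N}∘α_{L,TM,TN}∘(L⊗w⁻¹_{TM,N})∘(L⊗γ_{R,M,N}) = γ_{L,M,N}∘w_{L,M⋆N} and the tetragon ε_M∘w_{M,R} = r_M∘(M⊗ε_R). -/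
open CategoryTheory

universe v u

variable {C : Type u} [Category.{v} C] {R : C}

section
variable (S Sx : RightMonoidalStruct C R)

/-- A tetrahedral homomorphism from the `⋆`-structure `S` to the
`⊗`-structure `Sx` (with common unit `R`): a natural transformation
`t_{L,M,N} : L ⊗ (M ⋆ N) → (L ⊗ M) ⋆ N` satisfying the two pentagons and the
unit and counit triangles. -/
def TetraHom (t : ∀ L M N : C, Sx.smp L (S.smp M N) ⟶ S.smp (Sx.smp L M) N) :
    Prop :=
  (∀ {L L' M M' N N' : C} (f : L ⟶ L') (g : M ⟶ M') (h : N ⟶ N'),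
      Sx.smpHom f (S.smpHom g h) ≫ t L' M' N'
        = t L M N ≫ S.smpHom (Sx.smpHom f g) h) ∧
  (∀ K L M N : C,
      Sx.smpHom (𝟙 K) (t L M N) ≫ t K (Sx.smp L M) N
          ≫ S.smpHom (Sx.γ K L M) (𝟙 N)
        = Sx.γ K L (S.smp M N) ≫ t (Sx.smp K L) M N) ∧
  (∀ K L M N : C,
      Sx.smpHom (𝟙 K) (S.γ L M N) ≫ t K (S.smp L M) N
          ≫ S.smpHom (t K L M) (𝟙 N)
        = t K L (S.smp M N) ≫ S.γ (Sx.smp K L) M N) ∧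
  (∀ M N : C, Sx.η (S.smp M N) ≫ t R M N = S.smpHom (Sx.η M) (𝟙 N)) ∧
  (∀ M N : C, t M N R ≫ S.ε (Sx.smp M N) = Sx.smpHom (𝟙 M) (S.ε N))

/-- The comparison `w_{M,N} := (r_M ⋆ N) ∘ t_{M,R,N} : M ⊗ TN → M ⋆ N`
associated to a tetrahedral homomorphism, where `T = R ⋆ -`. -/
def twOf (t : ∀ L M N : C, Sx.smp L (S.smp M N) ⟶ S.smp (Sx.smp L M) N)
    (M N : C) : Sx.smp M (S.smp R N) ⟶ S.smp M N :=
  t M R N ≫ S.smpHom (Sx.ε M) (𝟙 N)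

end

/-- A "representing" natural isomorphism `w_{M,N} : M ⊗ TN ≅ M ⋆ N` (where
`T = R ⋆ -` is the canonical monad of the `⋆`-structure `S` and `⊗` is the
structure `Sx`), satisfying the heptagon and tetragon equations. -/
structure GoodW (S Sx : RightMonoidalStruct C R)
    (w : ∀ M N : C, Sx.smp M (S.smp R N) ⟶ S.smp M N) : Prop where
  natural : ∀ {M M' N N' : C} (f : M ⟶ M') (g : N ⟶ N'),
      Sx.smpHom f (S.smpHom (𝟙 R) g) ≫ w M' N' = w M N ≫ S.smpHom f g
  iso : ∀ M N : C, IsIso (w M N)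
  heptagon : ∀ L M N : C,
      Sx.smpHom (𝟙 L) (S.γ R M N)
          ≫ Sx.smpHom (𝟙 L) (@inv _ _ _ _ (w (S.smp R M) N) (iso (S.smp R M) N))
          ≫ Sx.γ L (S.smp R M) (S.smp R N)
          ≫ w (Sx.smp L (S.smp R M)) N
          ≫ S.smpHom (w L M) (𝟙 N)
        = w L (S.smp M N) ≫ S.γ L M N
  tetragon : ∀ M : C,
      w M R ≫ S.ε M = Sx.smpHom (𝟙 M) (S.ε R) ≫ Sx.ε M

/-- The tetrahedral transformation
`t_{L,M,N} := w_{L⊗M,N} ∘ α_{L,M,TN} ∘ (L ⊗ w⁻¹_{M,N})` associated to a natural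
isomorphism `w` (with a chosen pointwise inverse `w'`). -/
def tOf (S Sx : RightMonoidalStruct C R)
    (w : ∀ M N : C, Sx.smp M (S.smp R N) ⟶ S.smp M N)
    (w' : ∀ M N : C, S.smp M N ⟶ Sx.smp M (S.smp R N))
    (L M N : C) : Sx.smp L (S.smp M N) ⟶ S.smp (Sx.smp L M) N :=
  Sx.smpHom (𝟙 L) (w' M N) ≫ Sx.γ L M (S.smp R N) ≫ w (Sx.smp L M) N


section AuxLemmas

lemma smpHom_comp_left (S : RightMonoidalStruct C R) {X A B D : C} (f : A ⟶ B) (g : B ⟶ D) :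
    S.smpHom (𝟙 X) (f ≫ g) = S.smpHom (𝟙 X) f ≫ S.smpHom (𝟙 X) g := by
  rw [← S.smpHom_comp, Category.comp_id]

lemma smpHom_comp_right (S : RightMonoidalStruct C R) {X A B D : C} (f : A ⟶ B) (g : B ⟶ D) :
    S.smpHom (f ≫ g) (𝟙 X) = S.smpHom f (𝟙 X) ≫ S.smpHom g (𝟙 X) := by
  rw [← S.smpHom_comp, Category.comp_id]

lemma isIso_smpHom_id (S : RightMonoidalStruct C R) (X : C) {A B : C} (f : A ⟶ B) [IsIso f] :
    IsIso (S.smpHom (𝟙 X) f) :=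
  ⟨S.smpHom (𝟙 X) (inv f),
    by rw [← S.smpHom_comp, Category.comp_id, IsIso.hom_inv_id, S.smpHom_id],
    by rw [← S.smpHom_comp, Category.comp_id, IsIso.inv_hom_id, S.smpHom_id]⟩

variable (S Sx : RightMonoidalStruct C R)

lemma P3 (t : ∀ L M N : C, Sx.smp L (S.smp M N) ⟶ S.smp (Sx.smp L M) N)
    (ht : TetraHom S Sx t) (L M N : C) :
    Sx.smpHom (𝟙 L) (twOf S Sx t M N) ≫ t L M N
      = Sx.γ L M (S.smp R N) ≫ twOf S Sx t (Sx.smp L M) N := by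
  obtain ⟨t1, t2, t3, t4, t5⟩ := ht
  show Sx.smpHom (𝟙 L) (t M R N ≫ S.smpHom (Sx.ε M) (𝟙 N)) ≫ t L M N
      = Sx.γ L M (S.smp R N) ≫ t (Sx.smp L M) R N ≫ S.smpHom (Sx.ε (Sx.smp L M)) (𝟙 N)
  rw [smpHom_comp_left, Category.assoc, t1 (𝟙 L) (Sx.ε M) (𝟙 N),
      ← Sx.counit_triangle L M, smpHom_comp_right, reassoc_of% t2 L M R N]


lemma tOf_twOf (t : ∀ L M N : C, Sx.smp L (S.smp M N) ⟶ S.smp (Sx.smp L M) N)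
    (ht : TetraHom S Sx t) (hiso : ∀ M N : C, IsIso (twOf S Sx t M N)) (L M N : C) :
    tOf S Sx (twOf S Sx t)
        (fun M N => @inv _ _ _ _ (twOf S Sx t M N) (hiso M N)) L M N = t L M N := by
  show Sx.smpHom (𝟙 L) (@inv _ _ _ _ (twOf S Sx t M N) (hiso M N))
      ≫ Sx.γ L M (S.smp R N) ≫ twOf S Sx t (Sx.smp L M) N = t L M N
  haveI := hiso M N
  rw [← P3 S Sx t ht, ← Category.assoc, ← Sx.smpHom_comp, Category.comp_id,
      IsIso.inv_hom_id, Sx.smpHom_id, Category.id_comp]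

lemma part1 (t : ∀ L M N : C, Sx.smp L (S.smp M N) ⟶ S.smp (Sx.smp L M) N)
    (ht : TetraHom S Sx t) (hiso : ∀ M N : C, IsIso (twOf S Sx t M N)) :
    GoodW S Sx (twOf S Sx t) := by
  obtain ⟨t1, t2, t3, t4, t5⟩ := ht
  refine ⟨?_, hiso, ?_, ?_⟩
  · -- naturality
    intro M M' N N' f g
    show Sx.smpHom f (S.smpHom (𝟙 R) g) ≫ t M' R N' ≫ S.smpHom (Sx.ε M') (𝟙 N')
        = (t M R N ≫ S.smpHom (Sx.ε M) (𝟙 N)) ≫ S.smpHom f g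
    rw [← Category.assoc, t1 f (𝟙 R) g, Category.assoc, ← S.smpHom_comp,
        Sx.ε_natural f, Category.comp_id, Category.assoc, ← S.smpHom_comp,
        Category.id_comp]
  · -- heptagon
    intro L M N
    have hchunk : Sx.smpHom (𝟙 L)
          (@inv _ _ _ _ (twOf S Sx t (S.smp R M) N) (hiso (S.smp R M) N))
        ≫ Sx.γ L (S.smp R M) (S.smp R N) ≫ twOf S Sx t (Sx.smp L (S.smp R M)) N
        = t L (S.smp R M) N :=
      tOf_twOf S Sx t ⟨t1, t2, t3, t4, t5⟩ hiso L (S.smp R M) N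
    rw [reassoc_of% hchunk]
    show Sx.smpHom (𝟙 L) (S.γ R M N) ≫ t L (S.smp R M) N
          ≫ S.smpHom (t L R M ≫ S.smpHom (Sx.ε L) (𝟙 M)) (𝟙 N)
        = (t L R (S.smp M N) ≫ S.smpHom (Sx.ε L) (𝟙 (S.smp M N))) ≫ S.γ L M N
    rw [smpHom_comp_right]
    simp only [Category.assoc]
    rw [reassoc_of% t3 L R M N, ← S.γ_natural (Sx.ε L) (𝟙 M) (𝟙 N), S.smpHom_id]
  · -- tetragon
    intro M
    show (t M R R ≫ S.smpHom (Sx.ε M) (𝟙 R)) ≫ S.ε M = Sx.smpHom (𝟙 M) (S.ε R) ≫ Sx.ε M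
    rw [Category.assoc, S.ε_natural (Sx.ε M), ← Category.assoc, t5 M R]


lemma smpHom_exch (S : RightMonoidalStruct C R) {A A' B B' B'' : C}
    (f : A ⟶ A') (g : B ⟶ B') (h : B' ⟶ B'') :
    S.smpHom f (g ≫ h) = S.smpHom (𝟙 A) g ≫ S.smpHom f h := by
  rw [← S.smpHom_comp, Category.id_comp]

lemma GoodW_inv_natural (w : ∀ M N : C, Sx.smp M (S.smp R N) ⟶ S.smp M N)
    (hw : GoodW S Sx w) {M M' N N' : C} (g : M ⟶ M') (h : N ⟶ N') :
    S.smpHom g h ≫ @inv _ _ _ _ (w M' N') (hw.iso M' N')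
      = @inv _ _ _ _ (w M N) (hw.iso M N) ≫ Sx.smpHom g (S.smpHom (𝟙 R) h) := by
  haveI := hw.iso M N; haveI := hw.iso M' N'
  rw [IsIso.comp_inv_eq, Category.assoc, hw.natural g h, IsIso.inv_hom_id_assoc]

lemma part2a (w : ∀ M N : C, Sx.smp M (S.smp R N) ⟶ S.smp M N) (hw : GoodW S Sx w) :
    TetraHom S Sx (tOf S Sx w (fun M N => @inv _ _ _ _ (w M N) (hw.iso M N))) := by
  refine ⟨?_, ?_, ?_, ?_, ?_⟩
  · -- naturality
    intro L L' M M' N N' f g h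
    simp only [tOf, Category.assoc]
    have e1 : Sx.smpHom f (S.smpHom g h)
        ≫ Sx.smpHom (𝟙 L') (@inv _ _ _ _ (w M' N') (hw.iso M' N'))
        = Sx.smpHom (𝟙 L) (@inv _ _ _ _ (w M N) (hw.iso M N))
          ≫ Sx.smpHom f (Sx.smpHom g (S.smpHom (𝟙 R) h)) := by
      rw [← Sx.smpHom_comp, Category.comp_id, GoodW_inv_natural S Sx w hw g h,
        smpHom_exch Sx]
    rw [reassoc_of% e1, reassoc_of% Sx.γ_natural f g (S.smpHom (𝟙 R) h),
      hw.natural (Sx.smpHom f g) h]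
  · -- tensor pentagon
    intro K L M N
    haveI := hw.iso M N
    haveI := hw.iso (Sx.smp L M) N
    simp only [tOf, Category.assoc]
    rw [smpHom_comp_left, smpHom_comp_left]
    simp only [Category.assoc]
    have h1 : Sx.smpHom (𝟙 K) (w (Sx.smp L M) N)
        ≫ Sx.smpHom (𝟙 K) (@inv _ _ _ _ (w (Sx.smp L M) N) (hw.iso (Sx.smp L M) N))
        = 𝟙 _ := by
      rw [← smpHom_comp_left, IsIso.hom_inv_id, Sx.smpHom_id]
    rw [reassoc_of% h1]
    have h2 : w (Sx.smp K (Sx.smp L M)) N ≫ S.smpHom (Sx.γ K L M) (𝟙 N)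
        = Sx.smpHom (Sx.γ K L M) (𝟙 (S.smp R N)) ≫ w (Sx.smp (Sx.smp K L) M) N := by
      rw [← hw.natural (Sx.γ K L M) (𝟙 N), S.smpHom_id]
    rw [h2, reassoc_of% Sx.pentagon K L M (S.smp R N),
      reassoc_of% Sx.γ_natural (𝟙 K) (𝟙 L) (@inv _ _ _ _ (w M N) (hw.iso M N)),
      Sx.smpHom_id K L]
  · -- star pentagon
    intro K L M N
    haveI := hw.iso L (S.smp M N)
    haveI := isIso_smpHom_id Sx K (w L (S.smp M N))
    rw [← cancel_epi (Sx.smpHom (𝟙 K) (w L (S.smp M N)))]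
    simp only [tOf, Category.assoc]
    trans (Sx.γ K L (S.smp R (S.smp M N))
      ≫ Sx.smpHom (𝟙 (Sx.smp K L)) (S.γ R M N)
      ≫ Sx.smpHom (𝟙 (Sx.smp K L))
          (@inv _ _ _ _ (w (S.smp R M) N) (hw.iso (S.smp R M) N))
      ≫ Sx.γ (Sx.smp K L) (S.smp R M) (S.smp R N)
      ≫ w (Sx.smp (Sx.smp K L) (S.smp R M)) N
      ≫ S.smpHom (w (Sx.smp K L) M) (𝟙 N))
    · have h1 : Sx.smpHom (𝟙 K) (w L (S.smp M N)) ≫ Sx.smpHom (𝟙 K) (S.γ L M N)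
          = Sx.smpHom (𝟙 K) (Sx.smpHom (𝟙 L) (S.γ R M N))
            ≫ Sx.smpHom (𝟙 K) (Sx.smpHom (𝟙 L)
                (@inv _ _ _ _ (w (S.smp R M) N) (hw.iso (S.smp R M) N)))
            ≫ Sx.smpHom (𝟙 K) (Sx.γ L (S.smp R M) (S.smp R N))
            ≫ Sx.smpHom (𝟙 K) (w (Sx.smp L (S.smp R M)) N)
            ≫ Sx.smpHom (𝟙 K) (S.smpHom (w L M) (𝟙 N)) := by
        rw [← smpHom_comp_left, ← smpHom_comp_left, ← smpHom_comp_left,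
          ← smpHom_comp_left, ← smpHom_comp_left, hw.heptagon L M N]
      rw [reassoc_of% h1]
      have h2 : Sx.smpHom (𝟙 K) (S.smpHom (w L M) (𝟙 N))
          ≫ Sx.smpHom (𝟙 K) (@inv _ _ _ _ (w (S.smp L M) N) (hw.iso (S.smp L M) N))
          = Sx.smpHom (𝟙 K)
              (@inv _ _ _ _ (w (Sx.smp L (S.smp R M)) N) (hw.iso (Sx.smp L (S.smp R M)) N))
            ≫ Sx.smpHom (𝟙 K) (Sx.smpHom (w L M) (𝟙 (S.smp R N))) := by
        rw [← smpHom_comp_left, ← smpHom_comp_left,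
          GoodW_inv_natural S Sx w hw (w L M) (𝟙 N), S.smpHom_id]
      rw [reassoc_of% h2]
      haveI := hw.iso (Sx.smp L (S.smp R M)) N
      have h3 : Sx.smpHom (𝟙 K) (w (Sx.smp L (S.smp R M)) N)
          ≫ Sx.smpHom (𝟙 K)
              (@inv _ _ _ _ (w (Sx.smp L (S.smp R M)) N) (hw.iso (Sx.smp L (S.smp R M)) N))
          = 𝟙 _ := by
        rw [← smpHom_comp_left, IsIso.hom_inv_id, Sx.smpHom_id]
      rw [reassoc_of% h3]
      have h4 : w (Sx.smp K (S.smp L M)) N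
          ≫ S.smpHom (Sx.smpHom (𝟙 K) (@inv _ _ _ _ (w L M) (hw.iso L M))
              ≫ Sx.γ K L (S.smp R M) ≫ w (Sx.smp K L) M) (𝟙 N)
          = Sx.smpHom (Sx.smpHom (𝟙 K) (@inv _ _ _ _ (w L M) (hw.iso L M))
              ≫ Sx.γ K L (S.smp R M) ≫ w (Sx.smp K L) M) (𝟙 (S.smp R N))
            ≫ w (S.smp (Sx.smp K L) M) N := by
        rw [← hw.natural _ (𝟙 N), S.smpHom_id]
      rw [h4, smpHom_comp_right Sx, smpHom_comp_right Sx]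
      simp only [Category.assoc]
      rw [reassoc_of% Sx.γ_natural (𝟙 K) (w L M) (𝟙 (S.smp R N))]
      haveI := hw.iso L M
      have h7 : Sx.smpHom (Sx.smpHom (𝟙 K) (w L M)) (𝟙 (S.smp R N))
          ≫ Sx.smpHom (Sx.smpHom (𝟙 K) (@inv _ _ _ _ (w L M) (hw.iso L M))) (𝟙 (S.smp R N))
          = 𝟙 _ := by
        rw [← Sx.smpHom_comp, Category.comp_id, ← smpHom_comp_left,
          IsIso.hom_inv_id, Sx.smpHom_id, Sx.smpHom_id]
      rw [reassoc_of% h7]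
      have h8 : Sx.smpHom (w (Sx.smp K L) M) (𝟙 (S.smp R N)) ≫ w (S.smp (Sx.smp K L) M) N
          = w (Sx.smp (Sx.smp K L) (S.smp R M)) N ≫ S.smpHom (w (Sx.smp K L) M) (𝟙 N) := by
        rw [← hw.natural (w (Sx.smp K L) M) (𝟙 N), S.smpHom_id]
      rw [h8, reassoc_of% Sx.pentagon K L (S.smp R M) (S.smp R N),
        reassoc_of% Sx.γ_natural (𝟙 K) (𝟙 L)
          (@inv _ _ _ _ (w (S.smp R M) N) (hw.iso (S.smp R M) N)),
        Sx.smpHom_id K L,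
        reassoc_of% Sx.γ_natural (𝟙 K) (𝟙 L) (S.γ R M N), Sx.smpHom_id K L]
    · symm
      have g1 : Sx.smpHom (𝟙 K) (w L (S.smp M N))
          ≫ Sx.smpHom (𝟙 K) (@inv _ _ _ _ (w L (S.smp M N)) (hw.iso L (S.smp M N)))
          = 𝟙 _ := by
        rw [← smpHom_comp_left, IsIso.hom_inv_id, Sx.smpHom_id]
      rw [reassoc_of% g1, ← hw.heptagon (Sx.smp K L) M N]
  · -- unit triangle
    intro M N
    haveI := hw.iso M N
    simp only [tOf]
    rw [← reassoc_of% Sx.η_natural (@inv _ _ _ _ (w M N) (hw.iso M N)),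
      reassoc_of% Sx.unit_triangle M (S.smp R N)]
    have hn : Sx.smpHom (Sx.η M) (𝟙 (S.smp R N)) ≫ w (Sx.smp R M) N
        = w M N ≫ S.smpHom (Sx.η M) (𝟙 N) := by
      rw [← hw.natural (Sx.η M) (𝟙 N), S.smpHom_id]
    rw [hn, IsIso.inv_hom_id_assoc]
  · -- counit triangle
    intro M N
    haveI := hw.iso N R
    simp only [tOf, Category.assoc]
    rw [hw.tetragon (Sx.smp M N), ← Sx.smpHom_id M N,
      ← reassoc_of% Sx.γ_natural (𝟙 M) (𝟙 N) (S.ε R),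
      Sx.counit_triangle M N, ← smpHom_comp_left, ← smpHom_comp_left,
      ← hw.tetragon N, IsIso.inv_hom_id_assoc]

lemma winv_R (w : ∀ M N : C, Sx.smp M (S.smp R N) ⟶ S.smp M N)
    (hw : GoodW S Sx w) (N : C) :
    @inv _ _ _ _ (w R N) (hw.iso R N)
      = S.smpHom (𝟙 R) (S.η N) ≫ S.γ R R N
        ≫ @inv _ _ _ _ (w (S.smp R R) N) (hw.iso (S.smp R R) N)
        ≫ Sx.smpHom (S.ε R) (𝟙 (S.smp R N)) := by
  haveI := hw.iso R N
  haveI := hw.iso (S.smp R R) N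
  apply IsIso.inv_eq_of_inv_hom_id
  have h : Sx.smpHom (S.ε R) (𝟙 (S.smp R N)) ≫ w R N
      = w (S.smp R R) N ≫ S.smpHom (S.ε R) (𝟙 N) := by
    rw [← hw.natural (S.ε R) (𝟙 N), S.smpHom_id]
  simp only [Category.assoc]
  rw [h, IsIso.inv_hom_id_assoc, S.mixed_triangle R N]

lemma E2 (w : ∀ M N : C, Sx.smp M (S.smp R N) ⟶ S.smp M N)
    (hw : GoodW S Sx w) (L N : C) :
    Sx.smpHom (𝟙 L) (@inv _ _ _ _ (w R N) (hw.iso R N))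
      ≫ Sx.γ L R (S.smp R N) ≫ Sx.smpHom (Sx.ε L) (𝟙 (S.smp R N)) ≫ w L N
      = w L N := by
  rw [winv_R S Sx w hw N, smpHom_comp_left, smpHom_comp_left, smpHom_comp_left]
  simp only [Category.assoc]
  rw [reassoc_of% Sx.γ_natural (𝟙 L) (S.ε R) (𝟙 (S.smp R N))]
  have hb : Sx.smpHom (Sx.smpHom (𝟙 L) (S.ε R)) (𝟙 (S.smp R N))
      ≫ Sx.smpHom (Sx.ε L) (𝟙 (S.smp R N))
      = Sx.smpHom (w L R) (𝟙 (S.smp R N)) ≫ Sx.smpHom (S.ε L) (𝟙 (S.smp R N)) := by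
    rw [← smpHom_comp_right, ← smpHom_comp_right, hw.tetragon L]
  rw [reassoc_of% hb]
  have hc : Sx.smpHom (S.ε L) (𝟙 (S.smp R N)) ≫ w L N
      = w (S.smp L R) N ≫ S.smpHom (S.ε L) (𝟙 N) := by
    rw [← hw.natural (S.ε L) (𝟙 N), S.smpHom_id]
  rw [hc]
  have hd : Sx.smpHom (w L R) (𝟙 (S.smp R N)) ≫ w (S.smp L R) N
      = w (Sx.smp L (S.smp R R)) N ≫ S.smpHom (w L R) (𝟙 N) := by
    rw [← hw.natural (w L R) (𝟙 N), S.smpHom_id]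
  rw [reassoc_of% hd, reassoc_of% hw.heptagon L R N,
    reassoc_of% hw.natural (𝟙 L) (S.η N), S.mixed_triangle L N, Category.comp_id]

lemma part4 (w : ∀ M N : C, Sx.smp M (S.smp R N) ⟶ S.smp M N)
    (hw : GoodW S Sx w) (M N : C) :
    twOf S Sx (tOf S Sx w (fun M N => @inv _ _ _ _ (w M N) (hw.iso M N))) M N
      = w M N := by
  simp only [twOf, tOf, Category.assoc]
  have h : w (Sx.smp M R) N ≫ S.smpHom (Sx.ε M) (𝟙 N)
      = Sx.smpHom (Sx.ε M) (𝟙 (S.smp R N)) ≫ w M N := by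
    rw [← hw.natural (Sx.ε M) (𝟙 N), S.smpHom_id]
  rw [h]
  exact E2 S Sx w hw M N

end AuxLemmas

/-- Proposition 8.4 of Szlachányi.  For right-monoidal
structures `⋆` and `⊗` on the same category with the same unit `R`, the
assignments `t ↦ w := (r⋆N)∘t_{M,R,N}` and
`w ↦ t := w_{L⊗M,N}∘α_{L,M,TN}∘(L⊗w⁻¹_{M,N})` are mutually inverse bijections
between tetrahedral isomorphisms `t` and natural isomorphisms
`w : M ⊗ TN ≅ M ⋆ N` satisfying the heptagon and tetragon equations. -/
theorem tetrahedral_w_bijection (S Sx : RightMonoidalStruct C R) :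
    (∀ t : ∀ L M N : C, Sx.smp L (S.smp M N) ⟶ S.smp (Sx.smp L M) N,
        TetraHom S Sx t → (∀ M N : C, IsIso (twOf S Sx t M N)) →
        GoodW S Sx (twOf S Sx t)) ∧
    (∀ (w : ∀ M N : C, Sx.smp M (S.smp R N) ⟶ S.smp M N) (hw : GoodW S Sx w),
        TetraHom S Sx
            (tOf S Sx w (fun M N => @inv _ _ _ _ (w M N) (hw.iso M N))) ∧
        (∀ M N : C,
          IsIso (twOf S Sx
            (tOf S Sx w (fun M N => @inv _ _ _ _ (w M N) (hw.iso M N))) M N))) ∧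
    (∀ t : ∀ L M N : C, Sx.smp L (S.smp M N) ⟶ S.smp (Sx.smp L M) N,
        TetraHom S Sx t →
        ∀ hiso : ∀ M N : C, IsIso (twOf S Sx t M N),
        ∀ L M N : C,
          tOf S Sx (twOf S Sx t)
              (fun M N => @inv _ _ _ _ (twOf S Sx t M N) (hiso M N)) L M N
            = t L M N) ∧
    (∀ (w : ∀ M N : C, Sx.smp M (S.smp R N) ⟶ S.smp M N) (hw : GoodW S Sx w),
        ∀ M N : C,
          twOf S Sx
              (tOf S Sx w (fun M N => @inv _ _ _ _ (w M N) (hw.iso M N))) M N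
            = w M N) := by
  refine ⟨fun t ht hiso => part1 S Sx t ht hiso,
    fun w hw => ⟨part2a S Sx w hw, fun M N => by
      rw [part4 S Sx w hw M N]; exact hw.iso M N⟩,
    fun t ht hiso L M N => tOf_twOf S Sx t ht hiso L M N,
    fun w hw M N => part4 S Sx w hw M N⟩
end

section
/- Let ⋆ and ⊗ be two right-monoidal structures on the same category with the same unit object R, let T = ⟨R⋆−, μ, η⟩ be the canonical monad of the ⋆-structure, and let w_{M,N} : M⊗TN → M⋆N be a natural isomorphism satisfying the heptagon (w_{L,M}⋆N)∘w_{L⊗TM,N}∘α_{L,TM,TN}∘(L⊗w⁻¹_{TM,N})∘(L⊗γ_{R,M,N}) = γ_{L,M,N}∘w_{L,M⋆N} and the tetragon ε_M∘w_{M,R} = r_M∘(M⊗ε_R). Then h_{M,N} := w⁻¹_{TM,N}∘γ_{R,M,N}∘Tw_{M,N} : T(M⊗TN) → TM⊗TN, together with T⁰ := ε_R : TR → R, is a fusion operator for the monad T; i.e., it satisfies: (H0) (TM⊗μ_N)∘h_{M,TN} = h_{M,N}∘T(M⊗μ_N); (H1) (h_{L,M}⊗TN)∘h_{L⊗TM,N}∘Tα_{L,TM,TN}∘T(L⊗h_{M,N})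 = α_{TL,TM,TN}∘(TL⊗h_{M,N})∘h_{L,M⊗TN}; (H2) h_{M,N}∘η_{M⊗TN} = η_M⊗TN; (H3) (T⁰⊗TN)∘h_{R,N}∘Tℓ⁻¹_{TN} = ℓ⁻¹_{TN}∘μ_N; (H4) r_{TM}∘(TM⊗T⁰)∘h_{M,R} = Tr_M∘T(M⊗T⁰); (H5) (μ_M⊗TN)∘h_{TM,N}∘Th_{M,N} = h_{M,N}∘μ_{M⊗TN}; (H6) T⁰∘η_R = id_R. -/
open CategoryTheory

universe v u

variable {C : Type u} [Category.{v} C] {R : C}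

section Aux

variable (S Sx : RightMonoidalStruct C R)

lemma smp_comp_l {X X' X'' Y : C} (f : X ⟶ X') (g : X' ⟶ X'') :
    S.smpHom (f ≫ g) (𝟙 Y) = S.smpHom f (𝟙 Y) ≫ S.smpHom g (𝟙 Y) := by
  rw [← S.smpHom_comp, Category.comp_id]

lemma smp_comp_r {X Y Y' Y'' : C} (f : Y ⟶ Y') (g : Y' ⟶ Y'') :
    S.smpHom (𝟙 X) (f ≫ g) = S.smpHom (𝟙 X) f ≫ S.smpHom (𝟙 X) g := by
  rw [← S.smpHom_comp, Category.comp_id]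

lemma smp_exch {X X' Y Y' : C} (f : X ⟶ X') (g : Y ⟶ Y') :
    S.smpHom f (𝟙 Y) ≫ S.smpHom (𝟙 X') g = S.smpHom f g := by
  rw [← S.smpHom_comp, Category.comp_id, Category.id_comp]

lemma smp_exch' {X X' Y Y' : C} (f : X ⟶ X') (g : Y ⟶ Y') :
    S.smpHom (𝟙 X) g ≫ S.smpHom f (𝟙 Y') = S.smpHom f g := by
  rw [← S.smpHom_comp, Category.comp_id, Category.id_comp]

lemma μ_natural {X X' : C} (f : X ⟶ X') :
    S.smpHom (𝟙 R) (S.smpHom (𝟙 R) f) ≫ S.μ X' = S.μ X ≫ S.smpHom (𝟙 R) f := by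
  simp only [RightMonoidalStruct.μ]
  slice_lhs 1 2 => rw [S.γ_natural]
  rw [S.smpHom_id]
  slice_lhs 2 3 => rw [smp_exch' S, ← smp_exch S]
  simp only [Category.assoc]

lemma ηT_μ (N : C) : S.smpHom (𝟙 R) (S.η N) ≫ S.μ N = 𝟙 (S.smp R N) := by
  simp only [RightMonoidalStruct.μ]
  exact S.mixed_triangle R N

lemma μ_γ (M N : C) :
    S.smpHom (𝟙 R) (S.γ R M N) ≫ S.γ R (S.smp R M) N ≫ S.smpHom (S.μ M) (𝟙 N)
      = S.μ (S.smp M N) ≫ S.γ R M N := by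
  simp only [RightMonoidalStruct.μ]
  rw [smp_comp_l]
  slice_lhs 1 3 => rw [S.pentagon R R M N]
  slice_lhs 2 3 => rw [← S.γ_natural (S.ε R) (𝟙 M) (𝟙 N)]
  rw [S.smpHom_id]
  simp only [Category.assoc]

variable (w : ∀ M N : C, Sx.smp M (S.smp R N) ⟶ S.smp M N) (hw : GoodW S Sx w)

include hw

/-- The inverse of `w`. -/
noncomputable def wi (M N : C) : S.smp M N ⟶ Sx.smp M (S.smp R N) :=
  @inv _ _ _ _ (w M N) (hw.iso M N)

lemma w_wi (M N : C) : w M N ≫ wi S Sx w hw M N = 𝟙 _ := by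
  haveI := hw.iso M N; simp [wi]

lemma wi_w (M N : C) : wi S Sx w hw M N ≫ w M N = 𝟙 _ := by
  haveI := hw.iso M N; simp [wi]

lemma w_nat_l {M M' : C} (N : C) (f : M ⟶ M') :
    Sx.smpHom f (𝟙 (S.smp R N)) ≫ w M' N = w M N ≫ S.smpHom f (𝟙 N) := by
  have := hw.natural f (𝟙 N); rwa [S.smpHom_id] at this

lemma wi_nat_l {M M' : C} (N : C) (f : M ⟶ M') :
    wi S Sx w hw M N ≫ Sx.smpHom f (𝟙 (S.smp R N))
      = S.smpHom f (𝟙 N) ≫ wi S Sx w hw M' N := by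
  haveI := hw.iso M N; haveI := hw.iso M' N
  rw [wi, wi, IsIso.inv_comp_eq, ← Category.assoc, IsIso.eq_comp_inv]
  exact w_nat_l S Sx w hw N f

lemma wi_nat_r (M : C) {N N' : C} (g : N ⟶ N') :
    wi S Sx w hw M N ≫ Sx.smpHom (𝟙 M) (S.smpHom (𝟙 R) g)
      = S.smpHom (𝟙 M) g ≫ wi S Sx w hw M N' := by
  haveI := hw.iso M N; haveI := hw.iso M N'
  rw [wi, wi, IsIso.inv_comp_eq, ← Category.assoc, IsIso.eq_comp_inv]
  exact hw.natural (𝟙 M) g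

lemma u_hept (M N : C) :
    S.γ R M N ≫ S.smpHom (Sx.η (S.smp R M) ≫ w R M) (𝟙 N)
      = (Sx.η (S.smp R (S.smp M N)) ≫ w R (S.smp M N)) ≫ S.γ R M N := by
  have H : Sx.smpHom (𝟙 R) (S.γ R M N)
      ≫ Sx.smpHom (𝟙 R) (wi S Sx w hw (S.smp R M) N)
      ≫ Sx.γ R (S.smp R M) (S.smp R N)
      ≫ w (Sx.smp R (S.smp R M)) N
      ≫ S.smpHom (w R M) (𝟙 N)
      = w R (S.smp M N) ≫ S.γ R M N := hw.heptagon R M N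
  symm
  calc (Sx.η (S.smp R (S.smp M N)) ≫ w R (S.smp M N)) ≫ S.γ R M N
      = Sx.η (S.smp R (S.smp M N)) ≫ Sx.smpHom (𝟙 R) (S.γ R M N)
          ≫ Sx.smpHom (𝟙 R) (wi S Sx w hw (S.smp R M) N)
          ≫ Sx.γ R (S.smp R M) (S.smp R N)
          ≫ w (Sx.smp R (S.smp R M)) N
          ≫ S.smpHom (w R M) (𝟙 N) := by rw [Category.assoc, ← H]
    _ = S.γ R M N ≫ Sx.η (S.smp (S.smp R M) N)
          ≫ Sx.smpHom (𝟙 R) (wi S Sx w hw (S.smp R M) N)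
          ≫ Sx.γ R (S.smp R M) (S.smp R N)
          ≫ w (Sx.smp R (S.smp R M)) N
          ≫ S.smpHom (w R M) (𝟙 N) := by
        slice_lhs 1 2 => rw [← Sx.η_natural (S.γ R M N)]
        simp only [Category.assoc]
    _ = S.γ R M N ≫ wi S Sx w hw (S.smp R M) N
          ≫ Sx.η (Sx.smp (S.smp R M) (S.smp R N))
          ≫ Sx.γ R (S.smp R M) (S.smp R N)
          ≫ w (Sx.smp R (S.smp R M)) N
          ≫ S.smpHom (w R M) (𝟙 N) := by
        slice_lhs 2 3 => rw [← Sx.η_natural (wi S Sx w hw (S.smp R M) N)]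
        simp only [Category.assoc]
    _ = S.γ R M N ≫ wi S Sx w hw (S.smp R M) N
          ≫ Sx.smpHom (Sx.η (S.smp R M)) (𝟙 (S.smp R N))
          ≫ w (Sx.smp R (S.smp R M)) N
          ≫ S.smpHom (w R M) (𝟙 N) := by
        slice_lhs 3 4 => rw [Sx.unit_triangle (S.smp R M) (S.smp R N)]
        simp only [Category.assoc]
    _ = S.γ R M N ≫ wi S Sx w hw (S.smp R M) N
          ≫ w (S.smp R M) N
          ≫ S.smpHom (Sx.η (S.smp R M)) (𝟙 N)
          ≫ S.smpHom (w R M) (𝟙 N) := by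
        slice_lhs 3 4 => rw [w_nat_l S Sx w hw N (Sx.η (S.smp R M))]
        simp only [Category.assoc]
    _ = S.γ R M N ≫ S.smpHom (Sx.η (S.smp R M)) (𝟙 N) ≫ S.smpHom (w R M) (𝟙 N) := by
        slice_lhs 2 3 => rw [wi_w S Sx w hw]
        simp only [Category.assoc, Category.id_comp]
    _ = S.γ R M N ≫ S.smpHom (Sx.η (S.smp R M) ≫ w R M) (𝟙 N) := by
        rw [← smp_comp_l]

lemma u_nat {N N' : C} (g : N ⟶ N') :
    (Sx.η (S.smp R N) ≫ w R N) ≫ S.smpHom (𝟙 R) g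
      = S.smpHom (𝟙 R) g ≫ (Sx.η (S.smp R N') ≫ w R N') := by
  calc (Sx.η (S.smp R N) ≫ w R N) ≫ S.smpHom (𝟙 R) g
      = Sx.η (S.smp R N) ≫ Sx.smpHom (𝟙 R) (S.smpHom (𝟙 R) g) ≫ w R N' := by
        rw [Category.assoc, ← hw.natural (𝟙 R) g]
    _ = S.smpHom (𝟙 R) g ≫ Sx.η (S.smp R N') ≫ w R N' := by
        slice_lhs 1 2 => rw [← Sx.η_natural (S.smpHom (𝟙 R) g)]
        simp only [Category.assoc]
    _ = S.smpHom (𝟙 R) g ≫ (Sx.η (S.smp R N') ≫ w R N') := rfl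

lemma u_counit : (Sx.η (S.smp R R) ≫ w R R) ≫ S.ε R = S.ε R := by
  calc (Sx.η (S.smp R R) ≫ w R R) ≫ S.ε R
      = Sx.η (S.smp R R) ≫ Sx.smpHom (𝟙 R) (S.ε R) ≫ Sx.ε R := by
        rw [Category.assoc, hw.tetragon R]
    _ = S.ε R ≫ Sx.η R ≫ Sx.ε R := by
        slice_lhs 1 2 => rw [← Sx.η_natural (S.ε R)]
        simp only [Category.assoc]
    _ = S.ε R := by rw [Sx.unit_counit, Category.comp_id]

lemma u_id (N : C) : Sx.η (S.smp R N) ≫ w R N = 𝟙 (S.smp R N) := by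
  have h3 : (Sx.η (S.smp R (S.smp R N)) ≫ w R (S.smp R N)) ≫ S.μ N = S.μ N := by
    simp only [RightMonoidalStruct.μ]
    calc (Sx.η (S.smp R (S.smp R N)) ≫ w R (S.smp R N)) ≫ S.γ R R N ≫ S.smpHom (S.ε R) (𝟙 N)
        = (S.γ R R N ≫ S.smpHom (Sx.η (S.smp R R) ≫ w R R) (𝟙 N)) ≫ S.smpHom (S.ε R) (𝟙 N) := by
          rw [← Category.assoc, ← u_hept S Sx w hw R N]
      _ = S.γ R R N ≫ S.smpHom ((Sx.η (S.smp R R) ≫ w R R) ≫ S.ε R) (𝟙 N) := by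
          rw [Category.assoc, ← smp_comp_l]
      _ = S.γ R R N ≫ S.smpHom (S.ε R) (𝟙 N) := by rw [u_counit S Sx w hw]
  calc Sx.η (S.smp R N) ≫ w R N
      = (Sx.η (S.smp R N) ≫ w R N) ≫ S.smpHom (𝟙 R) (S.η N) ≫ S.μ N := by
        rw [ηT_μ, Category.comp_id]
    _ = S.smpHom (𝟙 R) (S.η N) ≫ (Sx.η (S.smp R (S.smp R N)) ≫ w R (S.smp R N)) ≫ S.μ N := by
        slice_lhs 1 3 => rw [← Category.assoc, u_nat S Sx w hw (S.η N)]
        simp only [Category.assoc]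
    _ = S.smpHom (𝟙 R) (S.η N) ≫ S.μ N := by rw [h3]
    _ = 𝟙 (S.smp R N) := ηT_μ S N

lemma wi_R (N : C) : wi S Sx w hw R N = Sx.η (S.smp R N) := by
  have := u_id S Sx w hw N
  calc wi S Sx w hw R N = (Sx.η (S.smp R N) ≫ w R N) ≫ wi S Sx w hw R N := by
        rw [this, Category.id_comp]
    _ = Sx.η (S.smp R N) := by rw [Category.assoc, w_wi S Sx w hw, Category.comp_id]

lemma wi_nat {M M' N N' : C} (f : M ⟶ M') (g : N ⟶ N') :
    wi S Sx w hw M N ≫ Sx.smpHom f (S.smpHom (𝟙 R) g)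
      = S.smpHom f g ≫ wi S Sx w hw M' N' := by
  haveI := hw.iso M N; haveI := hw.iso M' N'
  rw [wi, wi, IsIso.inv_comp_eq, ← Category.assoc, IsIso.eq_comp_inv]
  exact hw.natural f g

lemma lemA (M N : C) :
    Sx.smpHom (𝟙 M) (S.μ N) ≫ w M N
      = w M (S.smp R N) ≫ S.γ M R N ≫ S.smpHom (S.ε M) (𝟙 N) := by
  have H : Sx.smpHom (𝟙 M) (S.γ R R N)
      ≫ Sx.smpHom (𝟙 M) (wi S Sx w hw (S.smp R R) N)
      ≫ Sx.γ M (S.smp R R) (S.smp R N)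
      ≫ w (Sx.smp M (S.smp R R)) N
      ≫ S.smpHom (w M R) (𝟙 N)
      = w M (S.smp R N) ≫ S.γ M R N := hw.heptagon M R N
  symm
  rw [← Category.assoc, ← H]
  simp only [Category.assoc]
  -- fold the two last ⋆-whiskered maps, apply the tetragon
  slice_lhs 5 6 => rw [← smp_comp_l S, hw.tetragon M, smp_comp_l S]
  -- move the ⊗-whiskered maps across w
  slice_lhs 4 5 => rw [← w_nat_l S Sx w hw N (Sx.smpHom (𝟙 M) (S.ε R))]
  slice_lhs 5 6 => rw [← w_nat_l S Sx w hw N (Sx.ε M)]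
  -- naturality of the ⊗-associator
  slice_lhs 3 4 => rw [← Sx.γ_natural (𝟙 M) (S.ε R) (𝟙 (S.smp R N))]
  -- identify w⁻¹_{R,N} with the ⊗-unit
  slice_lhs 2 3 => rw [← smp_comp_r Sx, wi_nat_l S Sx w hw N (S.ε R),
    wi_R S Sx w hw N]
  slice_lhs 1 2 => rw [← smp_comp_r Sx]
  rw [show S.γ R R N ≫ S.smpHom (S.ε R) (𝟙 N) ≫ Sx.η (S.smp R N)
      = S.μ N ≫ Sx.η (S.smp R N) by
    simp only [RightMonoidalStruct.μ, Category.assoc]]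
  rw [smp_comp_r Sx]
  slice_lhs 2 4 => rw [Sx.mixed_triangle M (S.smp R N)]
  simp only [Category.assoc, Category.id_comp]

/-- The fusion operator built from `w`. -/
noncomputable def hfun (M N : C) :
    S.smp R (Sx.smp M (S.smp R N)) ⟶ Sx.smp (S.smp R M) (S.smp R N) :=
  S.smpHom (𝟙 R) (w M N) ≫ S.γ R M N ≫ wi S Sx w hw (S.smp R M) N

lemma hfun_w (M N : C) :
    hfun S Sx w hw M N ≫ w (S.smp R M) N
      = S.smpHom (𝟙 R) (w M N) ≫ S.γ R M N := by
  simp only [hfun, Category.assoc, wi_w S Sx w hw, Category.comp_id]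

lemma hnat {M M' N N' : C} (f : M ⟶ M') (g : N ⟶ N') :
    S.smpHom (𝟙 R) (Sx.smpHom f (S.smpHom (𝟙 R) g)) ≫ hfun S Sx w hw M' N'
      = hfun S Sx w hw M N ≫ Sx.smpHom (S.smpHom (𝟙 R) f) (S.smpHom (𝟙 R) g) := by
  simp only [hfun, Category.assoc]
  slice_lhs 1 2 => rw [← smp_comp_r S, hw.natural f g, smp_comp_r S]
  slice_lhs 2 3 => rw [S.γ_natural (𝟙 R) f g]
  slice_lhs 3 4 => rw [← wi_nat S Sx w hw (S.smpHom (𝟙 R) f) g]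

lemma h2 (M N : C) :
    S.η (Sx.smp M (S.smp R N)) ≫ hfun S Sx w hw M N
      = Sx.smpHom (S.η M) (𝟙 (S.smp R N)) := by
  simp only [hfun]
  slice_lhs 1 2 => rw [← S.η_natural (w M N)]
  slice_lhs 2 3 => rw [S.unit_triangle M N]
  slice_lhs 2 3 => rw [← wi_nat_l S Sx w hw N (S.η M)]
  slice_lhs 1 2 => rw [w_wi S Sx w hw]
  simp only [Category.assoc, Category.id_comp]

lemma h3 (N : C) :
    S.smpHom (𝟙 R) (Sx.η (S.smp R N)) ≫ hfun S Sx w hw R N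
        ≫ Sx.smpHom (S.ε R) (𝟙 (S.smp R N))
      = S.μ N ≫ Sx.η (S.smp R N) := by
  simp only [hfun, Category.assoc]
  slice_lhs 1 2 => rw [← smp_comp_r S, u_id S Sx w hw N, S.smpHom_id]
  slice_lhs 3 4 => rw [wi_nat_l S Sx w hw N (S.ε R), wi_R S Sx w hw N]
  simp only [RightMonoidalStruct.μ, Category.assoc, Category.id_comp]

lemma h4 (M : C) :
    hfun S Sx w hw M R ≫ Sx.smpHom (𝟙 (S.smp R M)) (S.ε R) ≫ Sx.ε (S.smp R M)
      = S.smpHom (𝟙 R) (Sx.smpHom (𝟙 M) (S.ε R)) ≫ S.smpHom (𝟙 R) (Sx.ε M) := by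
  simp only [hfun, Category.assoc]
  slice_lhs 4 5 => rw [← hw.tetragon (S.smp R M)]
  slice_lhs 3 4 => rw [wi_w S Sx w hw]
  simp only [Category.id_comp]
  slice_lhs 2 3 => rw [S.counit_triangle R M]
  rw [← smp_comp_r S, ← smp_comp_r S, hw.tetragon M]

lemma h0 (M N : C) :
    hfun S Sx w hw M (S.smp R N) ≫ Sx.smpHom (𝟙 (S.smp R M)) (S.μ N)
      = S.smpHom (𝟙 R) (Sx.smpHom (𝟙 M) (S.μ N)) ≫ hfun S Sx w hw M N := by
  haveI := hw.iso (S.smp R M) N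
  rw [← cancel_mono (w (S.smp R M) N)]
  simp only [hfun, Category.assoc]
  slice_lhs 4 5 => rw [lemA S Sx w hw (S.smp R M) N]
  slice_lhs 3 4 => rw [wi_w S Sx w hw]
  simp only [Category.id_comp]
  slice_lhs 2 3 => rw [← S.pentagon R M R N]
  slice_lhs 4 5 => rw [← smp_comp_l S, S.counit_triangle R M]
  slice_lhs 3 4 => rw [← S.γ_natural (𝟙 R) (S.ε M) (𝟙 N)]
  slice_lhs 1 3 => rw [← smp_comp_r S, ← smp_comp_r S]
  rw [show w M (S.smp R N) ≫ S.γ M R N ≫ S.smpHom (S.ε M) (𝟙 N)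
      = Sx.smpHom (𝟙 M) (S.μ N) ≫ w M N from (lemA S Sx w hw M N).symm]
  rw [smp_comp_r S]
  simp only [Category.assoc, wi_w S Sx w hw, Category.comp_id]

lemma h5 (M N : C) :
    S.smpHom (𝟙 R) (hfun S Sx w hw M N) ≫ hfun S Sx w hw (S.smp R M) N
        ≫ Sx.smpHom (S.μ M) (𝟙 (S.smp R N))
      = S.μ (Sx.smp M (S.smp R N)) ≫ hfun S Sx w hw M N := by
  haveI := hw.iso (S.smp R M) N
  rw [← cancel_mono (w (S.smp R M) N)]
  simp only [hfun, Category.assoc]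
  slice_lhs 4 5 => rw [wi_nat_l S Sx w hw N (S.μ M)]
  slice_lhs 5 6 => rw [wi_w S Sx w hw]
  simp only [Category.comp_id, Category.id_comp]
  slice_rhs 4 5 => rw [wi_w S Sx w hw]
  simp only [Category.comp_id, Category.id_comp]
  have e1 : S.smpHom (𝟙 R) (S.smpHom (𝟙 R) (w M N) ≫ S.γ R M N
          ≫ wi S Sx w hw (S.smp R M) N) ≫ S.smpHom (𝟙 R) (w (S.smp R M) N)
      = S.smpHom (𝟙 R) (S.smpHom (𝟙 R) (w M N)) ≫ S.smpHom (𝟙 R) (S.γ R M N) := by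
    rw [← smp_comp_r S]
    simp only [Category.assoc, wi_w S Sx w hw, Category.comp_id]
    rw [smp_comp_r S]
  rw [← Category.assoc, e1]
  simp only [Category.assoc]
  slice_lhs 2 4 => rw [μ_γ S M N]
  slice_lhs 1 2 => rw [μ_natural S (w M N)]
  simp only [Category.assoc]

omit hw in
lemma smpHom_isIso {X X' Y Y' : C} (f : X ⟶ X') (g : Y ⟶ Y')
    [IsIso f] [IsIso g] : IsIso (S.smpHom f g) := by
  refine ⟨S.smpHom (inv f) (inv g), ?_, ?_⟩
  · rw [← S.smpHom_comp, IsIso.hom_inv_id, IsIso.hom_inv_id, S.smpHom_id]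
  · rw [← S.smpHom_comp, IsIso.inv_hom_id, IsIso.inv_hom_id, S.smpHom_id]

lemma hept2 (L M N : C) :
    Sx.smpHom (𝟙 L) (hfun S Sx w hw M N) ≫ Sx.γ L (S.smp R M) (S.smp R N)
        ≫ w (Sx.smp L (S.smp R M)) N ≫ S.smpHom (w L M) (𝟙 N)
      = w L (Sx.smp M (S.smp R N)) ≫ S.smpHom (𝟙 L) (w M N) ≫ S.γ L M N := by
  have H : Sx.smpHom (𝟙 L) (S.γ R M N)
      ≫ Sx.smpHom (𝟙 L) (wi S Sx w hw (S.smp R M) N)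
      ≫ Sx.γ L (S.smp R M) (S.smp R N)
      ≫ w (Sx.smp L (S.smp R M)) N
      ≫ S.smpHom (w L M) (𝟙 N)
      = w L (S.smp M N) ≫ S.γ L M N := hw.heptagon L M N
  simp only [hfun, smp_comp_r Sx, Category.assoc]
  slice_lhs 2 6 => rw [H]
  slice_lhs 1 2 => rw [hw.natural (𝟙 L) (w M N)]
  simp only [Category.assoc]

lemma h1 (L M N : C) :
    S.smpHom (𝟙 R) (Sx.smpHom (𝟙 L) (hfun S Sx w hw M N))
        ≫ S.smpHom (𝟙 R) (Sx.γ L (S.smp R M) (S.smp R N))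
        ≫ hfun S Sx w hw (Sx.smp L (S.smp R M)) N
        ≫ Sx.smpHom (hfun S Sx w hw L M) (𝟙 (S.smp R N))
      = hfun S Sx w hw L (Sx.smp M (S.smp R N))
          ≫ Sx.smpHom (𝟙 (S.smp R L)) (hfun S Sx w hw M N)
          ≫ Sx.γ (S.smp R L) (S.smp R M) (S.smp R N) := by
  haveI := hw.iso (S.smp R L) M
  haveI := hw.iso (S.smp (S.smp R L) M) N
  haveI : IsIso (Sx.smpHom (w (S.smp R L) M) (𝟙 (S.smp R N))) :=
    smpHom_isIso Sx (w (S.smp R L) M) (𝟙 (S.smp R N))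
  rw [← cancel_mono (Sx.smpHom (w (S.smp R L) M) (𝟙 (S.smp R N)))]
  rw [← cancel_mono (w (S.smp (S.smp R L) M) N)]
  simp only [Category.assoc]
  -- right-hand side
  slice_rhs 4 5 => rw [w_nat_l S Sx w hw N (w (S.smp R L) M)]
  slice_rhs 2 5 => rw [hept2 S Sx w hw (S.smp R L) M N]
  slice_rhs 1 2 => rw [hfun_w S Sx w hw L (Sx.smp M (S.smp R N))]
  have hx : S.γ R L (Sx.smp M (S.smp R N)) ≫ S.smpHom (𝟙 (S.smp R L)) (w M N)
      = S.smpHom (𝟙 R) (S.smpHom (𝟙 L) (w M N)) ≫ S.γ R L (S.smp M N) := by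
    have := S.γ_natural (𝟙 R) (𝟙 L) (w M N)
    rw [S.smpHom_id] at this
    exact this.symm
  slice_rhs 2 3 => rw [hx]
  -- left-hand side
  slice_lhs 4 5 => rw [← smp_comp_l Sx]
  rw [hfun_w S Sx w hw L M]
  slice_lhs 4 5 =>
    rw [w_nat_l S Sx w hw N (S.smpHom (𝟙 R) (w L M) ≫ S.γ R L M)]
  slice_lhs 3 4 => rw [hfun_w S Sx w hw (Sx.smp L (S.smp R M)) N]
  rw [smp_comp_l S]
  slice_lhs 4 5 => rw [← S.γ_natural (𝟙 R) (w L M) (𝟙 N)]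
  slice_lhs 1 4 => rw [← smp_comp_r S, ← smp_comp_r S, ← smp_comp_r S,
    hept2 S Sx w hw L M N, smp_comp_r S, smp_comp_r S]
  slice_lhs 3 5 => rw [S.pentagon R L M N]
  simp only [Category.assoc]

end Aux

/-- Lemma 8.6 of Szlachányi.  Let `⋆` and `⊗` be two
right-monoidal structures on the same category with the same unit `R`, let
`T = ⟨R⋆-, μ, η⟩` be the canonical monad of the `⋆`-structure, and let
`w_{M,N} : M ⊗ TN → M ⋆ N` be a natural isomorphism satisfying the heptagon
and tetragon equations.  Then `h_{M,N} := w⁻¹_{TM,N} ∘ γ_{R,M,N} ∘ Tw_{M,N}`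
together with `T⁰ := ε_R` is a fusion operator for `T`, i.e. it satisfies
(H0)–(H6). -/
theorem w_gives_fusion_operator (S Sx : RightMonoidalStruct C R)
    (w : ∀ M N : C, Sx.smp M (S.smp R N) ⟶ S.smp M N)
    (hw : GoodW S Sx w)
    (h : ∀ M N : C,
      S.smp R (Sx.smp M (S.smp R N)) ⟶ Sx.smp (S.smp R M) (S.smp R N))
    (hdef : ∀ M N : C,
      h M N = S.smpHom (𝟙 R) (w M N) ≫ S.γ R M N
        ≫ @inv _ _ _ _ (w (S.smp R M) N) (hw.iso (S.smp R M) N)) :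
    -- naturality of `h`
    (∀ {M M' N N' : C} (f : M ⟶ M') (g : N ⟶ N'),
        S.smpHom (𝟙 R) (Sx.smpHom f (S.smpHom (𝟙 R) g)) ≫ h M' N'
          = h M N ≫ Sx.smpHom (S.smpHom (𝟙 R) f) (S.smpHom (𝟙 R) g)) ∧
    -- (H0)
    (∀ M N : C,
        h M (S.smp R N) ≫ Sx.smpHom (𝟙 (S.smp R M)) (S.μ N)
          = S.smpHom (𝟙 R) (Sx.smpHom (𝟙 M) (S.μ N)) ≫ h M N) ∧
    -- (H1)
    (∀ L M N : C,
        S.smpHom (𝟙 R) (Sx.smpHom (𝟙 L) (h M N))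
            ≫ S.smpHom (𝟙 R) (Sx.γ L (S.smp R M) (S.smp R N))
            ≫ h (Sx.smp L (S.smp R M)) N
            ≫ Sx.smpHom (h L M) (𝟙 (S.smp R N))
          = h L (Sx.smp M (S.smp R N))
              ≫ Sx.smpHom (𝟙 (S.smp R L)) (h M N)
              ≫ Sx.γ (S.smp R L) (S.smp R M) (S.smp R N)) ∧
    -- (H2)
    (∀ M N : C,
        S.η (Sx.smp M (S.smp R N)) ≫ h M N
          = Sx.smpHom (S.η M) (𝟙 (S.smp R N))) ∧
    -- (H3)
    (∀ N : C,
        S.smpHom (𝟙 R) (Sx.η (S.smp R N)) ≫ h R N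
            ≫ Sx.smpHom (S.ε R) (𝟙 (S.smp R N))
          = S.μ N ≫ Sx.η (S.smp R N)) ∧
    -- (H4)
    (∀ M : C,
        h M R ≫ Sx.smpHom (𝟙 (S.smp R M)) (S.ε R) ≫ Sx.ε (S.smp R M)
          = S.smpHom (𝟙 R) (Sx.smpHom (𝟙 M) (S.ε R))
              ≫ S.smpHom (𝟙 R) (Sx.ε M)) ∧
    -- (H5)
    (∀ M N : C,
        S.smpHom (𝟙 R) (h M N) ≫ h (S.smp R M) N
            ≫ Sx.smpHom (S.μ M) (𝟙 (S.smp R N))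
          = S.μ (Sx.smp M (S.smp R N)) ≫ h M N) ∧
    -- (H6)
    (S.η R ≫ S.ε R = 𝟙 R) := by
  have hfe : ∀ M N : C, h M N = hfun S Sx w hw M N := hdef
  refine ⟨?_, ?_, ?_, ?_, ?_, ?_, ?_, S.unit_counit⟩
  · intro M M' N N' f g
    simp only [hfe]; exact hnat S Sx w hw f g
  · intro M N
    simp only [hfe]; exact h0 S Sx w hw M N
  · intro L M N
    simp only [hfe]; exact h1 S Sx w hw L M N
  · intro M N
    simp only [hfe]; exact h2 S Sx w hw M N
  · intro N
    simp only [hfe]; exact h3 S Sx w hw N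
  · intro M
    simp only [hfe]; exact h4 S Sx w hw M
  · intro M N
    simp only [hfe]; exact h5 S Sx w hw M N
end
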